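/- arXiv:2503.01182 — 12 statements merged into one kernel-verified Lean document; each statement's English description precedes it below -/
import Mathlib

section
/- Let E be a finite-dimensional real inner product space, p ≥ 1 an integer, c > 0 and u_min ∈ (0,1]. Let f : E → ℝ, x : ℕ → E, u : ℕ → ℝ and R : ℕ → ℝ be such that R 0 = f(x 0), u (k+1) ∈ [u_min, 1] for all k, R (k+1) = (1 - u (k+1))·R k + u (k+1)·f(x (k+1)) for all k, and f(x (k+1)) ≤ R k - c·‖x (k+1) - x k‖^(p+1) for all k. Then the sequence (R k) is monotonically decreasing and satisfies R (k+1) ≤ R k - u_min·c·‖x (k+1) - x k‖^(p+1) for all k ≥ 0. -/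
theorem relaxation_le_sub_mul {r a δ s t : ℝ} (ht : 0 ≤ t) (hst : s ≤ t) (hδ : 0 ≤ δ)
    (ha : a ≤ r - δ) : (1 - t) * r + t * a ≤ r - s * δ :=
  calc (1 - t) * r + t * a = r - t * (r - a) := by ring
    _ ≤ r - t * δ := by gcongr; linarith
    _ ≤ r - s * δ := by gcongr

theorem nhota_reference_sufficient_decrease_general
    {E : Type*} [NormedAddCommGroup E]
    (p : ℕ) (c u_min : ℝ) (hc : 0 < c) (humin : 0 < u_min ∧ u_min ≤ 1)
    (f : E → ℝ) (x : ℕ → E) (u : ℕ → ℝ) (R : ℕ → ℝ)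
    (hu : ∀ k : ℕ, u_min ≤ u (k + 1) ∧ u (k + 1) ≤ 1)
    (hRrec : ∀ k : ℕ, R (k + 1) = (1 - u (k + 1)) * R k + u (k + 1) * f (x (k + 1)))
    (hdec : ∀ k : ℕ, f (x (k + 1)) ≤ R k - c * ‖x (k + 1) - x k‖ ^ (p + 1)) :
    Antitone R ∧
      ∀ k : ℕ, R (k + 1) ≤ R k - u_min * c * ‖x (k + 1) - x k‖ ^ (p + 1) := by
  have decrease (k : ℕ) : R (k + 1) ≤ R k - u_min * c * ‖x (k + 1) - x k‖ ^ (p + 1) := by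
    rw [hRrec k, mul_assoc]
    exact relaxation_le_sub_mul (humin.1.le.trans (hu k).1) (hu k).1 (by positivity) (hdec k)
  refine ⟨antitone_nat_of_succ_le fun k => (decrease k).trans (sub_le_self _ ?_), decrease⟩
  exact mul_nonneg (mul_nonneg humin.1.le hc.le) (by positivity)

/-- Lemma 1(2): the reference sequence of NHOTA is monotonically decreasing and
satisfies the sufficient decrease `R (k+1) ≤ R k - u_min·c·‖x (k+1) - x k‖^(p+1)`. -/
theorem nhota_reference_sufficient_decrease
    {E : Type*} [NormedAddCommGroup E] [InnerProductSpace ℝ E] [FiniteDimensional ℝ E]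
    (p : ℕ) (hp : 1 ≤ p) (c u_min : ℝ) (hc : 0 < c) (humin : 0 < u_min ∧ u_min ≤ 1)
    (f : E → ℝ) (x : ℕ → E) (u : ℕ → ℝ) (R : ℕ → ℝ)
    (hR0 : R 0 = f (x 0))
    (hu : ∀ k : ℕ, u_min ≤ u (k + 1) ∧ u (k + 1) ≤ 1)
    (hRrec : ∀ k : ℕ, R (k + 1) = (1 - u (k + 1)) * R k + u (k + 1) * f (x (k + 1)))
    (hdec : ∀ k : ℕ, f (x (k + 1)) ≤ R k - c * ‖x (k + 1) - x k‖ ^ (p + 1)) :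
    Antitone R ∧
      ∀ k : ℕ, R (k + 1) ≤ R k - u_min * c * ‖x (k + 1) - x k‖ ^ (p + 1) :=
  nhota_reference_sufficient_decrease_general p c u_min hc humin f x u R hu hRrec hdec
end

section
/- Let p ≥ 1 be an integer and let A > 0, c > 0, u_min ∈ (0,1] and f* ∈ ℝ. Let E be a finite-dimensional real inner product space, x : ℕ → E, R : ℕ → ℝ and s : ℕ → ℝ with s k ≥ 0 for all k, such that for all k: R (k+1) ≤ R k - u_min·c·‖x (k+1) - x k‖^(p+1), s (k+1) ≤ A·‖x (k+1) - x k‖^p, and R k ≥ f*. Then for every k ≥ 1: min over i ∈ {1,…,k} of s i ≤ A·((R 0 - f*)/(u_min·c·k))^(p/(p+1)). -/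
/-- Theorem 2: global O(k^(-p/(p+1))) rate for the best stationarity measure of NHOTA. -/
theorem nhota_nonconvex_rate
    {E : Type*} [NormedAddCommGroup E] [InnerProductSpace ℝ E] [FiniteDimensional ℝ E]
    (p : ℕ) (hp : 1 ≤ p) (A c u_min fstar : ℝ)
    (hA : 0 < A) (hc : 0 < c) (humin : 0 < u_min ∧ u_min ≤ 1)
    (x : ℕ → E) (R : ℕ → ℝ) (s : ℕ → ℝ) (hs : ∀ k : ℕ, 0 ≤ s k)
    (hdec : ∀ k : ℕ, R (k + 1) ≤ R k - u_min * c * ‖x (k + 1) - x k‖ ^ (p + 1))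
    (hsb : ∀ k : ℕ, s (k + 1) ≤ A * ‖x (k + 1) - x k‖ ^ p)
    (hlb : ∀ k : ℕ, fstar ≤ R k) :
    ∀ k : ℕ, 1 ≤ k → ∃ i : ℕ, 1 ≤ i ∧ i ≤ k ∧
      s i ≤ A * ((R 0 - fstar) / (u_min * c * k)) ^ ((p : ℝ) / (p + 1)) := by
  intro k hk
  obtain ⟨hu0, hu1⟩ := humin
  set d : ℕ → ℝ := fun j => ‖x (j + 1) - x j‖ with hd
  have hdnn : ∀ j, 0 ≤ d j := fun j => norm_nonneg _
  -- telescoping sum bound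
  have hsum : ∀ n : ℕ, R n ≤ R 0 - ∑ j ∈ Finset.range n, u_min * c * d j ^ (p + 1) := by
    intro n
    induction n with
    | zero => simp
    | succ n ih =>
      have := hdec n
      rw [Finset.sum_range_succ]
      linarith
  -- pick the minimizer
  have hne : (Finset.range k).Nonempty := ⟨0, Finset.mem_range.2 hk⟩
  obtain ⟨m, hmmem, hmin⟩ := Finset.exists_min_image (Finset.range k) d hne
  have hmk : m < k := Finset.mem_range.1 hmmem
  have hkpos : (0:ℝ) < k := by exact_mod_cast hk
  have hucpos : 0 < u_min * c := mul_pos hu0 hc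
  -- k * u c d m^(p+1) ≤ sum ≤ R0 - fstar
  have hcard : (k : ℝ) * (u_min * c * d m ^ (p + 1)) ≤
      ∑ j ∈ Finset.range k, u_min * c * d j ^ (p + 1) := by
    have := Finset.card_nsmul_le_sum (Finset.range k)
        (fun j => u_min * c * d j ^ (p + 1)) (u_min * c * d m ^ (p + 1))
        (fun j hj => by
          have h := pow_le_pow_left₀ (hdnn m) (hmin j hj) (p + 1)
          exact mul_le_mul_of_nonneg_left h hucpos.le)
    simpa [Finset.card_range, nsmul_eq_mul] using this
  have hsumle : ∑ j ∈ Finset.range k, u_min * c * d j ^ (p + 1) ≤ R 0 - fstar := by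
    have h1 := hsum k
    have h2 := hlb k
    linarith
  have hdm : d m ^ (p + 1) ≤ (R 0 - fstar) / (u_min * c * k) := by
    rw [le_div_iff₀ (by positivity)]
    nlinarith
  -- rewrite d m ^ p as rpow
  have hbase_nn : (0:ℝ) ≤ d m ^ (p + 1) := by positivity
  have hexp_nn : (0:ℝ) ≤ (p : ℝ) / (p + 1) := by positivity
  have key : d m ^ p = (d m ^ (p + 1)) ^ ((p : ℝ) / (p + 1)) := by
    rw [← Real.rpow_natCast (d m) (p + 1), ← Real.rpow_natCast (d m) p,
      ← Real.rpow_mul (hdnn m)]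
    congr 1
    have : ((p:ℝ) + 1) ≠ 0 := by positivity
    push_cast
    field_simp
  refine ⟨m + 1, Nat.le_add_left 1 m, hmk, ?_⟩
  calc s (m + 1) ≤ A * d m ^ p := hsb m
    _ = A * (d m ^ (p + 1)) ^ ((p : ℝ) / (p + 1)) := by rw [key]
    _ ≤ A * ((R 0 - fstar) / (u_min * c * k)) ^ ((p : ℝ) / (p + 1)) := by
        exact mul_le_mul_of_nonneg_left (Real.rpow_le_rpow hbase_nn hdm hexp_nn) hA.le
end

section
/- Let E be a finite-dimensional real inner product space and f : E → ℝ a continuous function. Let x : ℕ → E, u : ℕ → ℝ and R : ℕ → ℝ be such that u (k+1) ∈ [u_min, 1] with u_min ∈ (0,1] for all k, R (k+1) = (1 - u (k+1))·R k + u (k+1)·f(x (k+1)) for all k, (R k) is nonincreasing, f(x k) ≤ R k for all k, and (R k) is bounded from below. Then (R k) converges to some limit f* ∈ ℝ, f(x k) → f* as k → ∞, and f(x̄) = f* for every cluster point x̄ of the sequence (x k). -/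
/-!
Since `R (k+1) - R k = u (k+1) * (f (x (k+1)) - R k)` with `u (k+1) ≥ u_min > 0`, the gap
`R k - f (x (k+1))` is at most `(R k - R (k+1)) / u_min`, which tends to `0` because the
nonincreasing, bounded-below sequence `R` converges. So `f (x k)` is squeezed onto the limit of
`R`, and continuity of `f` transfers this limit to every cluster point of `x`.
-/

open Filter Topology

section ConvexUpdate

variable {R a u : ℕ → ℝ} {c : ℝ}

lemma sub_sub_div_le_of_convex_update (hc : 0 < c) (hu : ∀ k, c ≤ u (k + 1))
    (hrec : ∀ k, R (k + 1) = (1 - u (k + 1)) * R k + u (k + 1) * a (k + 1))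
    (hanti : Antitone R) (k : ℕ) :
    R k - (R k - R (k + 1)) / c ≤ a (k + 1) := by
  have hupos : 0 < u (k + 1) := hc.trans_le (hu k)
  have hdecr : 0 ≤ R k - R (k + 1) := sub_nonneg.mpr (hanti k.le_succ)
  have hgap : R k - a (k + 1) = (R k - R (k + 1)) / u (k + 1) := by
    rw [eq_div_iff hupos.ne', hrec k]
    ring
  have : (R k - R (k + 1)) / u (k + 1) ≤ (R k - R (k + 1)) / c :=
    div_le_div_of_nonneg_left hdecr hc (hu k)
  linarith

lemma tendsto_of_convex_update {L : ℝ} (hc : 0 < c) (hu : ∀ k, c ≤ u (k + 1))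
    (hrec : ∀ k, R (k + 1) = (1 - u (k + 1)) * R k + u (k + 1) * a (k + 1))
    (hanti : Antitone R) (haR : ∀ k, a k ≤ R k) (hR : Tendsto R atTop (𝓝 L)) :
    Tendsto a atTop (𝓝 L) := by
  have hR_succ : Tendsto (fun k => R (k + 1)) atTop (𝓝 L) :=
    hR.comp (tendsto_add_atTop_nat 1)
  have hlower : Tendsto (fun k => R k - (R k - R (k + 1)) / c) atTop (𝓝 L) := by
    simpa using hR.sub ((hR.sub hR_succ).div_const c)
  refine (tendsto_add_atTop_iff_nat 1).mp ?_
  exact tendsto_of_tendsto_of_tendsto_of_le_of_le hlower hR_succ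
    (sub_sub_div_le_of_convex_update hc hu hrec hanti) (fun k => haR (k + 1))

end ConvexUpdate

lemma ContinuousAt.eq_of_tendsto_of_subseq {X Y : Type*} [TopologicalSpace X]
    [TopologicalSpace Y] [T2Space Y] {f : X → Y} {x : ℕ → X} {y : X} {L : Y}
    (hf : ContinuousAt f y) (hfx : Tendsto (fun k => f (x k)) atTop (𝓝 L))
    {φ : ℕ → ℕ} (hφ : StrictMono φ) (hxφ : Tendsto (fun t => x (φ t)) atTop (𝓝 y)) :
    f y = L :=
  tendsto_nhds_unique (hf.tendsto.comp hxφ) (hfx.comp hφ.tendsto_atTop)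

theorem nhota_limit_points_constant_value_general
    {E : Type*} [NormedAddCommGroup E]
    (f : E → ℝ) (hf : Continuous f)
    (x : ℕ → E) (u : ℕ → ℝ) (R : ℕ → ℝ)
    (u_min : ℝ) (humin : 0 < u_min ∧ u_min ≤ 1)
    (hu : ∀ k : ℕ, u_min ≤ u (k + 1) ∧ u (k + 1) ≤ 1)
    (hRrec : ∀ k : ℕ, R (k + 1) = (1 - u (k + 1)) * R k + u (k + 1) * f (x (k + 1)))
    (hmono : ∀ k : ℕ, R (k + 1) ≤ R k)
    (hfR : ∀ k : ℕ, f (x k) ≤ R k)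
    (hbdd : ∃ m : ℝ, ∀ k : ℕ, m ≤ R k) :
    ∃ fstar : ℝ,
      Filter.Tendsto R Filter.atTop (nhds fstar) ∧
      Filter.Tendsto (fun k : ℕ => f (x k)) Filter.atTop (nhds fstar) ∧
      ∀ y : E, (∃ φ : ℕ → ℕ, StrictMono φ ∧
          Filter.Tendsto (fun t : ℕ => x (φ t)) Filter.atTop (nhds y)) →
        f y = fstar := by
  have hanti : Antitone R := antitone_nat_of_succ_le hmono
  have hR : Tendsto R atTop (𝓝 (⨅ k, R k)) :=
    tendsto_atTop_ciInf hanti (hbdd.imp fun m hm => by rintro _ ⟨k, rfl⟩; exact hm k)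
  have hfx : Tendsto (fun k => f (x k)) atTop (𝓝 (⨅ k, R k)) :=
    tendsto_of_convex_update humin.1 (fun k => (hu k).1) hRrec hanti hfR hR
  refine ⟨⨅ k, R k, hR, hfx, ?_⟩
  rintro y ⟨φ, hφ, hxφ⟩
  exact hf.continuousAt.eq_of_tendsto_of_subseq hfx hφ hxφ

/-- Core of Lemma 3: the reference sequence converges, the objective values converge to
the same limit, and the objective is constant on the set of limit points of the iterates. -/
theorem nhota_limit_points_constant_value
    {E : Type*} [NormedAddCommGroup E] [InnerProductSpace ℝ E] [FiniteDimensional ℝ E]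
    (f : E → ℝ) (hf : Continuous f)
    (x : ℕ → E) (u : ℕ → ℝ) (R : ℕ → ℝ)
    (u_min : ℝ) (humin : 0 < u_min ∧ u_min ≤ 1)
    (hu : ∀ k : ℕ, u_min ≤ u (k + 1) ∧ u (k + 1) ≤ 1)
    (hRrec : ∀ k : ℕ, R (k + 1) = (1 - u (k + 1)) * R k + u (k + 1) * f (x (k + 1)))
    (hmono : ∀ k : ℕ, R (k + 1) ≤ R k)
    (hfR : ∀ k : ℕ, f (x k) ≤ R k)
    (hbdd : ∃ m : ℝ, ∀ k : ℕ, m ≤ R k) :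
    ∃ fstar : ℝ,
      Filter.Tendsto R Filter.atTop (nhds fstar) ∧
      Filter.Tendsto (fun k : ℕ => f (x k)) Filter.atTop (nhds fstar) ∧
      ∀ y : E, (∃ φ : ℕ → ℕ, StrictMono φ ∧
          Filter.Tendsto (fun t : ℕ => x (φ t)) Filter.atTop (nhds y)) →
        f y = fstar :=
  nhota_limit_points_constant_value_general f hf x u R u_min humin hu hRrec hmono hfR hbdd
end

section
/- Let E be a finite-dimensional real inner product space, p ≥ 1 an integer, and let σ > 0, q > 0, A > 0, c > 0, u_min ∈ (0,1] and f* ∈ ℝ. Let x : ℕ → E, u, R, s : ℕ → ℝ satisfy for all k: u (k+1) ∈ [u_min, 1]; R (k+1) = (1 - u (k+1))·R k + u (k+1)·f(x (k+1)) where f : E → ℝ; δ k := R k - f* ≥ 0; R k - R (k+1) ≥ u_min·c·‖x (k+1) - x k‖^(p+1); s (k+1) ≥ 0 and s (k+1) ≤ A·‖x (k+1) - x k‖^p; and f(x (k+1)) - f* ≤ σ·(s (k+1))^q. Then for all k: δ (k+1) ≤ (1/u_min)·(δ k - δ (k+1)) + (κ/u_min)·(δ k - δ (k+1))^(p·q/(p+1)),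 where κ = σ·A^q/(u_min·c)^(p·q/(p+1)). -/
/-!
Solving the relaxed update `R (k+1) = (1 - u) R k + u f(x (k+1))` for `R (k+1) - f*` splits the
new gap into `f(x (k+1)) - f*` plus `(1 - u)/u` times the decrease `Δ = R k - R (k+1)`, and the
second part is at most `Δ / u_min`. The first part is bounded by the KL inequality and the
stationarity bound by `σ A^q ‖x (k+1) - x k‖^(pq)`, and sufficient decrease turns the power
`‖x (k+1) - x k‖^(pq) = (‖x (k+1) - x k‖^(p+1))^(pq/(p+1))` into `(Δ / (u_min c))^(pq/(p+1))`.
-/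

lemma sub_le_add_div_of_relaxation {r r' y m u umin : ℝ} (humin : 0 < umin) (hu : umin ≤ u)
    (hr : r' ≤ r) (hrec : r' = (1 - u) * r + u * y) :
    r' - m ≤ (y - m) + (r - r') / umin := by
  have hu0 : 0 < u := humin.trans_le hu
  have hgap : r' - m = (y - m) + (1 - u) / u * (r - r') := by
    field_simp
    linear_combination hrec
  have hcoef : (1 - u) / u ≤ 1 / umin :=
    div_le_div₀ zero_le_one (by linarith) humin hu
  calc r' - m = (y - m) + (1 - u) / u * (r - r') := hgap
    _ ≤ (y - m) + 1 / umin * (r - r') := by gcongr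
    _ = (y - m) + (r - r') / umin := by ring

lemma Real.pow_rpow_eq_pow_succ_rpow {d : ℝ} (hd : 0 ≤ d) (p : ℕ) (q : ℝ) :
    (d ^ p) ^ q = (d ^ (p + 1)) ^ ((p : ℝ) * q / (p + 1)) := by
  rw [← Real.rpow_natCast_mul hd, ← Real.rpow_natCast_mul hd]
  congr 1
  push_cast
  field_simp

lemma rpow_le_of_le_mul_pow_of_mul_pow_succ_le {s A d a Δ q : ℝ} (p : ℕ) (hs : 0 ≤ s)
    (hA : 0 ≤ A) (hd : 0 ≤ d) (ha : 0 < a) (hq : 0 ≤ q)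
    (hsb : s ≤ A * d ^ p) (hdec : a * d ^ (p + 1) ≤ Δ) :
    s ^ q ≤ A ^ q / a ^ ((p : ℝ) * q / (p + 1)) * Δ ^ ((p : ℝ) * q / (p + 1)) := by
  set θ : ℝ := (p : ℝ) * q / (p + 1)
  have hθ : 0 ≤ θ := by positivity
  have hΔ : 0 ≤ Δ := le_trans (by positivity) hdec
  have hdΔ : d ^ (p + 1) ≤ Δ / a := by rw [le_div_iff₀ ha]; linarith
  calc s ^ q ≤ (A * d ^ p) ^ q := Real.rpow_le_rpow hs hsb hq
    _ = A ^ q * (d ^ (p + 1)) ^ θ := by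
      rw [Real.mul_rpow hA (by positivity), Real.pow_rpow_eq_pow_succ_rpow hd]
    _ ≤ A ^ q * (Δ / a) ^ θ := by gcongr
    _ = A ^ q / a ^ θ * Δ ^ θ := by
      rw [Real.div_rpow hΔ ha.le]
      ring

theorem nhota_kl_recurrence_general
    {E : Type*} [NormedAddCommGroup E]
    (p : ℕ) (σ q A c u_min fstar : ℝ)
    (hσ : 0 < σ) (hq : 0 < q) (hA : 0 < A) (hc : 0 < c)
    (humin : 0 < u_min ∧ u_min ≤ 1)
    (f : E → ℝ) (x : ℕ → E) (u R s : ℕ → ℝ)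
    (hu : ∀ k : ℕ, u_min ≤ u (k + 1) ∧ u (k + 1) ≤ 1)
    (hRrec : ∀ k : ℕ, R (k + 1) = (1 - u (k + 1)) * R k + u (k + 1) * f (x (k + 1)))
    (hdec : ∀ k : ℕ, u_min * c * ‖x (k + 1) - x k‖ ^ (p + 1) ≤ R k - R (k + 1))
    (hs : ∀ k : ℕ, 0 ≤ s (k + 1))
    (hsb : ∀ k : ℕ, s (k + 1) ≤ A * ‖x (k + 1) - x k‖ ^ p)
    (hkl : ∀ k : ℕ, f (x (k + 1)) - fstar ≤ σ * s (k + 1) ^ q) :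
    ∀ k : ℕ,
      R (k + 1) - fstar ≤
        (1 / u_min) * ((R k - fstar) - (R (k + 1) - fstar)) +
          ((σ * A ^ q / (u_min * c) ^ ((p : ℝ) * q / (p + 1))) / u_min) *
            ((R k - fstar) - (R (k + 1) - fstar)) ^ ((p : ℝ) * q / (p + 1)) := by
  intro k
  obtain ⟨humin0, humin1⟩ := humin
  set θ : ℝ := (p : ℝ) * q / (p + 1)
  rw [sub_sub_sub_cancel_right]
  have hΔ : 0 ≤ R k - R (k + 1) := le_trans (by positivity) (hdec k)
  have hKL : σ * s (k + 1) ^ q ≤ σ * (A ^ q / (u_min * c) ^ θ * (R k - R (k + 1)) ^ θ) :=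
    mul_le_mul_of_nonneg_left (rpow_le_of_le_mul_pow_of_mul_pow_succ_le p (hs k) hA.le
      (norm_nonneg _) (by positivity) hq.le (hsb k) (hdec k)) hσ.le
  calc R (k + 1) - fstar ≤ (f (x (k + 1)) - fstar) + (R k - R (k + 1)) / u_min :=
        sub_le_add_div_of_relaxation humin0 (hu k).1 (by linarith) (hRrec k)
    _ ≤ σ * (A ^ q / (u_min * c) ^ θ * (R k - R (k + 1)) ^ θ) + (R k - R (k + 1)) / u_min := by
        linarith [hkl k]
    _ ≤ σ * (A ^ q / (u_min * c) ^ θ * (R k - R (k + 1)) ^ θ) / u_min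
          + (R k - R (k + 1)) / u_min := by
        gcongr
        exact le_div_self (by positivity) humin0 humin1
    _ = _ := by ring

/-- Key recurrence in the proof of Theorem 5 (KL case): the gap `δ k = R k - f*` of the
reference sequence satisfies
`δ (k+1) ≤ (1/u_min)·(δ k - δ (k+1)) + (κ/u_min)·(δ k - δ (k+1))^(pq/(p+1))`
with `κ = σ·A^q/(u_min·c)^(pq/(p+1))`. -/
theorem nhota_kl_recurrence
    {E : Type*} [NormedAddCommGroup E] [InnerProductSpace ℝ E] [FiniteDimensional ℝ E]
    (p : ℕ) (hp : 1 ≤ p) (σ q A c u_min fstar : ℝ)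
    (hσ : 0 < σ) (hq : 0 < q) (hA : 0 < A) (hc : 0 < c)
    (humin : 0 < u_min ∧ u_min ≤ 1)
    (f : E → ℝ) (x : ℕ → E) (u R s : ℕ → ℝ)
    (hu : ∀ k : ℕ, u_min ≤ u (k + 1) ∧ u (k + 1) ≤ 1)
    (hRrec : ∀ k : ℕ, R (k + 1) = (1 - u (k + 1)) * R k + u (k + 1) * f (x (k + 1)))
    (hδ : ∀ k : ℕ, 0 ≤ R k - fstar)
    (hdec : ∀ k : ℕ, u_min * c * ‖x (k + 1) - x k‖ ^ (p + 1) ≤ R k - R (k + 1))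
    (hs : ∀ k : ℕ, 0 ≤ s (k + 1))
    (hsb : ∀ k : ℕ, s (k + 1) ≤ A * ‖x (k + 1) - x k‖ ^ p)
    (hkl : ∀ k : ℕ, f (x (k + 1)) - fstar ≤ σ * s (k + 1) ^ q) :
    ∀ k : ℕ,
      R (k + 1) - fstar ≤
        (1 / u_min) * ((R k - fstar) - (R (k + 1) - fstar)) +
          ((σ * A ^ q / (u_min * c) ^ ((p : ℝ) * q / (p + 1))) / u_min) *
            ((R k - fstar) - (R (k + 1) - fstar)) ^ ((p : ℝ) * q / (p + 1)) :=
  nhota_kl_recurrence_general p σ q A c u_min fstar hσ hq hA hc humin f x u R s hu hRrec hdec hs hsb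
    hkl
end

section
/- Let δ : ℕ → ℝ be a nonnegative nonincreasing sequence, let a ≥ 0, b ≥ 0 and γ ∈ (0,1), and suppose δ (k+1) ≤ a·(δ k - δ (k+1)) + b·(δ k - δ (k+1))^γ for all k. Then there exists a constant C > 0 such that δ k ≤ C·k^(−γ/(1−γ)) for all k ≥ 1. -/
/-!
Put `θ = (1 - γ) / γ`, so that `θ + 1 = 1 / γ`. Since every gap `δ k - δ (k + 1)` is at most
`δ 0`, the recurrence gives `δ (k + 1) ^ (θ + 1) ≤ K * (δ k - δ (k + 1))` for a constant `K`.
This forces `δ k ^ (-θ)` to grow by a fixed amount `μ` at every step while `δ k > 0`: by Bernoulli's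
inequality if `δ k ≤ 2 δ (k + 1)`, and otherwise because the growth is then at least
`(1 - 2 ^ (-θ)) δ (k + 1) ^ (-θ) ≥ (1 - 2 ^ (-θ)) δ 0 ^ (-θ)`.
Hence `δ k ^ (-θ) ≥ μ k`, that is `δ k ≤ (μ k) ^ (-1 / θ)`.
-/

open Real

lemma le_mul_rpow_of_le_add_mul_rpow {a b γ D Δ x : ℝ} (ha : 0 ≤ a) (hγ : γ ≤ 1)
    (hΔ : 0 ≤ Δ) (hΔD : Δ ≤ D) (h : x ≤ a * Δ + b * Δ ^ γ) :
    x ≤ (a * D ^ (1 - γ) + b) * Δ ^ γ := by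
  have hsplit : Δ = Δ ^ (1 - γ) * Δ ^ γ := by
    rw [← rpow_add' hΔ (by norm_num), sub_add_cancel, rpow_one]
  calc x ≤ a * (Δ ^ (1 - γ) * Δ ^ γ) + b * Δ ^ γ := hsplit ▸ h
    _ ≤ a * (D ^ (1 - γ) * Δ ^ γ) + b * Δ ^ γ := by gcongr
    _ = (a * D ^ (1 - γ) + b) * Δ ^ γ := by ring

lemma rpow_inv_le_of_le_mul_rpow {x c Δ γ : ℝ} (hx : 0 ≤ x) (hc : 0 ≤ c) (hΔ : 0 ≤ Δ)
    (hγ : 0 < γ) (h : x ≤ c * Δ ^ γ) : x ^ γ⁻¹ ≤ c ^ γ⁻¹ * Δ :=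
  calc x ^ γ⁻¹ ≤ (c * Δ ^ γ) ^ γ⁻¹ := rpow_le_rpow hx h (inv_nonneg.2 hγ.le)
    _ = c ^ γ⁻¹ * Δ := by rw [mul_rpow hc (rpow_nonneg hΔ _), rpow_rpow_inv hΔ hγ.ne']

lemma mul_sub_one_div_two_rpow_le_one_sub_rpow_neg {θ t : ℝ} (hθ : 0 ≤ θ) (ht1 : 1 ≤ t)
    (ht2 : t ≤ 2) : θ * (t - 1) / 2 ^ (θ + 1) ≤ 1 - t ^ (-θ) := by
  have ht0 : 0 < t := by linarith
  have bernoulli : 1 + (θ + 1) * (t - 1) ≤ t ^ (θ + 1) := by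
    simpa using one_add_mul_self_le_rpow_one_add (s := t - 1) (by linarith) (p := θ + 1)
      (by linarith)
  have hpow : t ^ (-θ) = t / t ^ (θ + 1) := by
    rw [rpow_add ht0, rpow_neg ht0.le, rpow_one]
    field_simp
  have htpos : 0 < t ^ (θ + 1) := by positivity
  calc θ * (t - 1) / 2 ^ (θ + 1) ≤ θ * (t - 1) / t ^ (θ + 1) := by gcongr
    _ ≤ 1 - t ^ (-θ) := by
        rw [hpow, div_le_iff₀ htpos, sub_mul, div_mul_cancel₀ _ htpos.ne']
        linarith

/-- The first term bounds the growth of `u ↦ u ^ (-θ)` over a step with `u ≤ v ≤ 2 u`, the second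
one over a longer step. -/
noncomputable def rateConst (θ K D : ℝ) : ℝ :=
  min (θ / (K * 2 ^ (θ + 1))) ((1 - 2 ^ (-θ)) * D ^ (-θ))

lemma rateConst_pos {θ K D : ℝ} (hθ : 0 < θ) (hK : 0 < K) (hD : 0 < D) :
    0 < rateConst θ K D := by
  have h2 : (2 : ℝ) ^ (-θ) < 1 := rpow_lt_one_of_one_lt_of_neg one_lt_two (by linarith)
  exact lt_min (by positivity) (mul_pos (by linarith) (by positivity))

lemma rpow_neg_add_rateConst_le {θ K D u v : ℝ} (hθ : 0 < θ) (hK : 0 < K) (hu : 0 < u)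
    (huv : u ≤ v) (huD : u ≤ D) (hgap : u ^ (θ + 1) ≤ K * (v - u)) :
    v ^ (-θ) + rateConst θ K D ≤ u ^ (-θ) := by
  obtain ⟨t, ht1, rfl⟩ : ∃ t, 1 ≤ t ∧ v = t * u :=
    ⟨v / u, (one_le_div hu).2 huv, by field_simp⟩
  rw [mul_rpow (by linarith) hu.le]
  suffices rateConst θ K D ≤ (1 - t ^ (-θ)) * u ^ (-θ) by linarith
  have htθ : t ^ (-θ) ≤ 1 := rpow_le_one_of_one_le_of_nonpos ht1 (by linarith)
  rcases le_or_gt 2 t with ht2 | ht2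
  · calc rateConst θ K D ≤ (1 - 2 ^ (-θ)) * D ^ (-θ) := min_le_right _ _
      _ ≤ (1 - t ^ (-θ)) * u ^ (-θ) := by
        gcongr (1 - ?_) * ?_
        · exact rpow_nonneg (hu.le.trans huD) _
        · exact rpow_le_rpow_of_nonpos (by norm_num) ht2 (by linarith)
        · exact rpow_le_rpow_of_nonpos hu huD (by linarith)
  · have hgap' : u ^ θ ≤ K * (t - 1) := by
      rw [rpow_add hu, rpow_one] at hgap
      nlinarith
    have ht1' : 1 < t := by
      by_contra! h
      have : 0 < u ^ θ := by positivity
      nlinarith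
    calc rateConst θ K D ≤ θ / (K * 2 ^ (θ + 1)) := min_le_left _ _
      _ = θ * (t - 1) / 2 ^ (θ + 1) * (K * (t - 1))⁻¹ := by
        field_simp [show t - 1 ≠ 0 by linarith]
      _ ≤ (1 - t ^ (-θ)) * u ^ (-θ) := by
        gcongr
        · exact mul_sub_one_div_two_rpow_le_one_sub_rpow_neg hθ.le ht1 ht2.le
        · rw [rpow_neg hu.le]
          gcongr

lemma mul_rateConst_le_rpow_neg {u : ℕ → ℝ} {θ K D : ℝ} (hθ : 0 < θ) (hK : 0 < K)
    (hanti : Antitone u) (hD : u 0 ≤ D)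
    (hgap : ∀ k, u (k + 1) ^ (θ + 1) ≤ K * (u k - u (k + 1))) :
    ∀ k : ℕ, 0 < u k → rateConst θ K D * k ≤ u k ^ (-θ) := by
  intro k
  induction k with
  | zero => intro hu0; simpa using (rpow_pos_of_pos hu0 _).le
  | succ k ih =>
    intro hpos
    have hstep := rpow_neg_add_rateConst_le hθ hK hpos (hanti k.le_succ)
      ((hanti (Nat.zero_le _)).trans hD) (hgap k)
    have := ih (hpos.trans_le (hanti k.le_succ))
    push_cast
    linarith

theorem recurrence_sublinear_rate_general
    (δ : ℕ → ℝ) (hnn : ∀ k : ℕ, 0 ≤ δ k) (hmono : ∀ k : ℕ, δ (k + 1) ≤ δ k)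
    (a b γ : ℝ) (ha : 0 ≤ a) (hγ : 0 < γ ∧ γ < 1)
    (hrec : ∀ k : ℕ, δ (k + 1) ≤ a * (δ k - δ (k + 1)) + b * (δ k - δ (k + 1)) ^ γ) :
    ∃ C : ℝ, 0 < C ∧ ∀ k : ℕ, 1 ≤ k → δ k ≤ C * (k : ℝ) ^ (-(γ / (1 - γ))) := by
  obtain ⟨hγ0, hγ1⟩ := hγ
  set θ := (1 - γ) / γ with hθ_def
  have hθ : 0 < θ := div_pos (by linarith) hγ0
  have hθγ : θ + 1 = γ⁻¹ := by rw [hθ_def, div_add_one hγ0.ne', sub_add_cancel, one_div]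
  have hexp : (-θ)⁻¹ = -(γ / (1 - γ)) := by rw [inv_neg, hθ_def, inv_div]
  have hanti : Antitone δ := antitone_nat_of_succ_le hmono
  set D := δ 0 + 1
  have hD : 0 < D := by linarith [hnn 0]
  set K := (max (a * D ^ (1 - γ) + b) 1) ^ γ⁻¹
  have hK : 0 < K := rpow_pos_of_pos (lt_max_of_lt_right one_pos) _
  have hgap (k : ℕ) : δ (k + 1) ^ (θ + 1) ≤ K * (δ k - δ (k + 1)) := by
    have hΔ : 0 ≤ δ k - δ (k + 1) := sub_nonneg.2 (hmono k)
    rw [hθγ]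
    refine rpow_inv_le_of_le_mul_rpow (hnn _) (zero_le_one.trans (le_max_right _ _)) hΔ hγ0 ?_
    calc δ (k + 1) ≤ (a * D ^ (1 - γ) + b) * (δ k - δ (k + 1)) ^ γ :=
          le_mul_rpow_of_le_add_mul_rpow ha hγ1.le hΔ
            (by linarith [hnn (k + 1), hanti (Nat.zero_le k)]) (hrec k)
      _ ≤ _ := by gcongr; exact le_max_left _ _
  have hμ := rateConst_pos hθ hK hD
  refine ⟨rateConst θ K D ^ (-(γ / (1 - γ))), by positivity, fun k hk => ?_⟩
  rcases (hnn k).eq_or_lt with hzero | hpos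
  · rw [← hzero]
    positivity
  have hk0 : (0 : ℝ) < k := by exact_mod_cast hk
  calc δ k ≤ (rateConst θ K D * k) ^ (-θ)⁻¹ :=
        (le_rpow_inv_iff_of_neg hpos (by positivity) (by linarith)).2
          (mul_rateConst_le_rpow_neg hθ hK hanti (by linarith) hgap k hpos)
    _ = _ := by rw [hexp, mul_rpow hμ.le hk0.le]

/-- Recurrence lemma: a nonnegative nonincreasing sequence satisfying
`δ (k+1) ≤ a·(δ k - δ (k+1)) + b·(δ k - δ (k+1))^γ` with `γ ∈ (0,1)` converges
at the sublinear rate `O(k^(−γ/(1−γ)))`. -/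
theorem recurrence_sublinear_rate
    (δ : ℕ → ℝ) (hnn : ∀ k : ℕ, 0 ≤ δ k) (hmono : ∀ k : ℕ, δ (k + 1) ≤ δ k)
    (a b γ : ℝ) (ha : 0 ≤ a) (hb : 0 ≤ b) (hγ : 0 < γ ∧ γ < 1)
    (hrec : ∀ k : ℕ, δ (k + 1) ≤ a * (δ k - δ (k + 1)) + b * (δ k - δ (k + 1)) ^ γ) :
    ∃ C : ℝ, 0 < C ∧ ∀ k : ℕ, 1 ≤ k → δ k ≤ C * (k : ℝ) ^ (-(γ / (1 - γ))) :=
  recurrence_sublinear_rate_general δ hnn hmono a b γ ha hγ hrec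
end

section
/- Let δ : ℕ → ℝ be a nonnegative nonincreasing sequence, let a ≥ 0, b ≥ 0 and γ ≥ 1, and suppose δ (k+1) ≤ a·(δ k - δ (k+1)) + b·(δ k - δ (k+1))^γ for all k. Then there exists K ∈ ℕ such that for all k ≥ K: δ (k+1) ≤ ((a+b)/(1+a+b))·δ k; in particular δ k converges to 0 at a linear rate. -/
/-! A convergent sequence has vanishing successive differences `d k = δ k - δ (k+1)`, so
eventually `d k ≤ 1` and hence `d k ^ γ ≤ d k` for `γ ≥ 1`. The recurrence then becomes
`δ (k+1) ≤ (a+b) · (δ k - δ (k+1))`, which rearranges to the linear contraction; a nonnegative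
sequence that eventually contracts by a factor `< 1` is summable by the ratio test, so it tends
to `0`. -/

open Filter Topology

theorem Filter.Tendsto.sub_succ_tendsto_zero {G : Type*} [TopologicalSpace G] [AddCommGroup G]
    [IsTopologicalAddGroup G] {f : ℕ → G} {L : G} (h : Tendsto f atTop (𝓝 L)) :
    Tendsto (fun k => f k - f (k + 1)) atTop (𝓝 0) := by
  simpa using h.sub (h.comp (tendsto_add_atTop_nat 1))

theorem le_div_one_add_mul_of_le_mul_sub {c x y : ℝ} (hc : 0 ≤ c) (h : y ≤ c * (x - y)) :
    y ≤ c / (1 + c) * x := by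
  rw [div_mul_eq_mul_div, le_div_iff₀ (by positivity)]
  linarith

theorem tendsto_zero_of_nonneg_of_eventually_le_mul {δ : ℕ → ℝ} {r : ℝ} (hnn : ∀ k, 0 ≤ δ k)
    (hr : r < 1) (h : ∀ᶠ k in atTop, δ (k + 1) ≤ r * δ k) : Tendsto δ atTop (𝓝 0) := by
  refine (summable_of_ratio_norm_eventually_le hr ?_).tendsto_atTop_zero
  filter_upwards [h] with k hk
  rwa [Real.norm_of_nonneg (hnn k), Real.norm_of_nonneg (hnn (k + 1))]

/-- Recurrence lemma: a nonnegative nonincreasing sequence satisfying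
`δ (k+1) ≤ a·(δ k - δ (k+1)) + b·(δ k - δ (k+1))^γ` with `γ ≥ 1` eventually contracts
linearly with factor `(a+b)/(1+a+b)`, and hence converges to 0. -/
theorem recurrence_eventual_linear_rate
    (δ : ℕ → ℝ) (hnn : ∀ k : ℕ, 0 ≤ δ k) (hmono : ∀ k : ℕ, δ (k + 1) ≤ δ k)
    (a b γ : ℝ) (ha : 0 ≤ a) (hb : 0 ≤ b) (hγ : 1 ≤ γ)
    (hrec : ∀ k : ℕ, δ (k + 1) ≤ a * (δ k - δ (k + 1)) + b * (δ k - δ (k + 1)) ^ γ) :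
    ∃ K : ℕ, (∀ k : ℕ, K ≤ k → δ (k + 1) ≤ ((a + b) / (1 + a + b)) * δ k) ∧
      Filter.Tendsto δ Filter.atTop (nhds 0) := by
  have hdiff : Tendsto (fun k => δ k - δ (k + 1)) atTop (𝓝 0) :=
    (tendsto_atTop_ciInf (antitone_nat_of_succ_le hmono)
      ⟨0, by rintro _ ⟨k, rfl⟩; exact hnn k⟩).sub_succ_tendsto_zero
  obtain ⟨K, hK⟩ := eventually_atTop.mp (hdiff.eventually (eventually_le_nhds zero_lt_one))
  have hcontr : ∀ k, K ≤ k → δ (k + 1) ≤ ((a + b) / (1 + a + b)) * δ k := by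
    intro k hk
    have hd : 0 ≤ δ k - δ (k + 1) := sub_nonneg.mpr (hmono k)
    have hpow := Real.rpow_le_self_of_le_one hd (hK k hk) hγ
    rw [add_assoc]
    refine le_div_one_add_mul_of_le_mul_sub (by positivity) ?_
    calc δ (k + 1) ≤ a * (δ k - δ (k + 1)) + b * (δ k - δ (k + 1)) ^ γ := hrec k
      _ ≤ a * (δ k - δ (k + 1)) + b * (δ k - δ (k + 1)) := by gcongr
      _ = (a + b) * (δ k - δ (k + 1)) := by ring
  have hrate : (a + b) / (1 + a + b) < 1 := by
    rw [div_lt_one (by positivity)]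
    linarith
  exact ⟨K, hcontr,
    tendsto_zero_of_nonneg_of_eventually_le_mul hnn hrate (eventually_atTop.mpr ⟨K, hcontr⟩)⟩
end

section
/- Let E be a finite-dimensional real inner product space, p ≥ 1 an integer, and let σ > 0, A > 0, c > 0, u_min ∈ (0,1], f* ∈ ℝ and q a real number with 0 < q < (p+1)/p. Let f : E → ℝ and let x : ℕ → E, u, R, s : ℕ → ℝ satisfy for all k: u (k+1) ∈ [u_min, 1]; R (k+1) = (1 - u (k+1))·R k + u (k+1)·f(x (k+1)); f* ≤ f(x k) ≤ R k; R k - R (k+1) ≥ u_min·c·‖x (k+1) - x k‖^(p+1); s (k+1) ≥ 0 and s (k+1) ≤ A·‖x (k+1) - x k‖^p; and f(x (k+1)) - f* ≤ σ·(s (k+1))^q. Then there exists C > 0 such that f(x k) - f* ≤ C·k^(−p·q/(p+1−p·q)) for all k ≥ 1. -/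
/-!
Put `r k = R k - f*` and `γ = p q / (p + 1) < 1`. The KL inequality, the bound on `s` and the
sufficient decrease give `f (x (k+1)) - f* ≤ L (r k - r (k+1)) ^ γ`; since the reference update
averages `R k` with `f (x (k+1))` and `r k - r (k+1) ≤ r 0`, this becomes the Łojasiewicz-type
recursion `r (k+1) ≤ K (r k - r (k+1)) ^ γ`. With `θ = 1/γ` and `β = 1/(θ - 1) = γ/(1 - γ)`,
the map `t ↦ t + t ^ θ / C₀` is increasing and `r` satisfies `r (k+1) + r (k+1) ^ θ / C₀ ≤ r k`,
while by the mean value theorem `C k ^ (-β)` satisfies the reverse inequality once `C` is large,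
so induction compares the two.
-/

open Real Set

theorem le_of_strictMonoOn_of_map_succ_le {α : Type*} [LinearOrder α] {s : Set α} {h : α → α}
    (hh : StrictMonoOn h s) {r g : ℕ → α} (hr : ∀ k, r k ∈ s) (hg : ∀ k, g k ∈ s)
    (hr_step : ∀ k, h (r (k + 1)) ≤ r k) (hg_step : ∀ k, 1 ≤ k → g k ≤ h (g (k + 1)))
    (h₁ : r 1 ≤ g 1) {k : ℕ} (hk : 1 ≤ k) : r k ≤ g k := by
  induction k, hk using Nat.le_induction with
  | base => exact h₁
  | succ k hk ih =>
    exact (hh.le_iff_le (hr _) (hg _)).1 ((hr_step k).trans (ih.trans (hg_step k hk)))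

theorem rpow_neg_sub_rpow_neg_le {x y β : ℝ} (hx : 0 < x) (hxy : x ≤ y) (hβ : 0 ≤ β) :
    x ^ (-β) - y ^ (-β) ≤ β * x ^ (-β - 1) * (y - x) := by
  rcases hxy.eq_or_lt with rfl | hlt
  · simp
  have hderiv : ∀ t ∈ Ioo x y, HasDerivAt (fun t => t ^ (-β)) (-β * t ^ (-β - 1)) t :=
    fun t ht => hasDerivAt_rpow_const (Or.inl (hx.trans ht.1).ne')
  obtain ⟨c, ⟨hxc, -⟩, hc⟩ := exists_hasDerivAt_eq_slope _ _ hlt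
    (fun t ht => (continuousAt_rpow_const _ _ (Or.inl (hx.trans_le ht.1).ne')).continuousWithinAt)
    hderiv
  have hcx : c ^ (-β - 1) ≤ x ^ (-β - 1) := rpow_le_rpow_of_nonpos hx hxc.le (by linarith)
  rw [eq_div_iff (sub_pos.2 hlt).ne'] at hc
  nlinarith [mul_le_mul_of_nonneg_right (mul_le_mul_of_nonneg_left hcx hβ) (sub_pos.2 hlt).le]

theorem mul_rpow_neg_le_add_rpow_div {C C₀ β θ n : ℝ} (hn : 1 ≤ n) (hβ : 0 < β)
    (hβθ : β * (θ - 1) = 1) (hC : 0 < C) (hC₀ : 0 < C₀)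
    (hCθ : C₀ * β * 2 ^ (β + 1) ≤ C ^ (θ - 1)) :
    C * n ^ (-β) ≤ C * (n + 1) ^ (-β) + (C * (n + 1) ^ (-β)) ^ θ / C₀ := by
  have hn0 : 0 < n := by linarith
  have hpow : (C * (n + 1) ^ (-β)) ^ θ = C ^ (θ - 1) * C * (n + 1) ^ (-β - 1) := by
    rw [mul_rpow hC.le (by positivity), ← rpow_mul (by positivity), rpow_sub_one hC.ne',
      div_mul_cancel₀ _ hC.ne']
    congr 2
    linear_combination -hβθ
  have hdouble : n ^ (-β - 1) ≤ 2 ^ (β + 1) * (n + 1) ^ (-β - 1) :=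
    calc n ^ (-β - 1) = 2 ^ (β + 1) * (2 * n) ^ (-β - 1) := by
          rw [mul_rpow zero_le_two hn0.le, ← mul_assoc, ← rpow_add two_pos]
          simp
      _ ≤ 2 ^ (β + 1) * (n + 1) ^ (-β - 1) :=
          mul_le_mul_of_nonneg_left
            (rpow_le_rpow_of_nonpos (by positivity) (by linarith) (by linarith)) (by positivity)
  have hmvt := rpow_neg_sub_rpow_neg_le hn0 (le_add_of_nonneg_right zero_le_one) hβ.le
  rw [add_sub_cancel_left, mul_one] at hmvt
  have hgap : C₀ * (C * (β * (2 ^ (β + 1) * (n + 1) ^ (-β - 1)))) ≤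
      C ^ (θ - 1) * C * (n + 1) ^ (-β - 1) := by
    have := mul_le_mul_of_nonneg_right hCθ (by positivity : 0 ≤ C * (n + 1) ^ (-β - 1))
    linarith
  calc C * n ^ (-β) = C * (n + 1) ^ (-β) + C * (n ^ (-β) - (n + 1) ^ (-β)) := by ring
    _ ≤ C * (n + 1) ^ (-β) + C * (β * (2 ^ (β + 1) * (n + 1) ^ (-β - 1))) := by
        gcongr
        exact hmvt.trans (mul_le_mul_of_nonneg_left hdouble hβ.le)
    _ ≤ C * (n + 1) ^ (-β) + (C * (n + 1) ^ (-β)) ^ θ / C₀ := by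
        rw [hpow]
        gcongr
        rwa [le_div_iff₀' hC₀]

theorem exists_le_mul_rpow_of_rpow_le_mul_sub {r : ℕ → ℝ} {θ C₀ : ℝ} (hθ : 1 < θ) (hC₀ : 0 < C₀)
    (hr : ∀ k, 0 ≤ r k) (hstep : ∀ k, r (k + 1) ^ θ ≤ C₀ * (r k - r (k + 1))) :
    ∃ C, 0 < C ∧ ∀ k, 1 ≤ k → r k ≤ C * (k : ℝ) ^ (-(θ - 1)⁻¹) := by
  set β := (θ - 1)⁻¹
  have hβ : 0 < β := inv_pos.2 (sub_pos.2 hθ)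
  have hβθ : β * (θ - 1) = 1 := inv_mul_cancel₀ (sub_pos.2 hθ).ne'
  set C := max (r 1) ((C₀ * β * 2 ^ (β + 1)) ^ β)
  have hC : 0 < C := lt_max_of_lt_right (by positivity)
  have hCθ : C₀ * β * 2 ^ (β + 1) ≤ C ^ (θ - 1) :=
    calc C₀ * β * 2 ^ (β + 1) = ((C₀ * β * 2 ^ (β + 1)) ^ β) ^ (θ - 1) := by
          rw [← rpow_mul (by positivity), hβθ, rpow_one]
      _ ≤ C ^ (θ - 1) := rpow_le_rpow (by positivity) (le_max_right _ _) (sub_pos.2 hθ).le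
  have hmono : StrictMonoOn (fun t => t + t ^ θ / C₀) (Ici 0) := by
    intro a ha b hb hab
    have := div_le_div_of_nonneg_right (rpow_le_rpow (z := θ) ha hab.le (by linarith)) hC₀.le
    dsimp only
    linarith
  refine ⟨C, hC, fun k hk => le_of_strictMonoOn_of_map_succ_le hmono hr
    (g := fun k => C * (k : ℝ) ^ (-β)) (fun k => mem_Ici.2 (by positivity)) (fun k => ?_)
    (fun k hk => ?_) (by simp [C]) hk⟩
  · have := hstep k
    rw [← div_le_iff₀' hC₀] at this
    linarith
  · push_cast
    exact mul_rpow_neg_le_add_rpow_div (by exact_mod_cast hk) hβ hβθ hC hC₀ hCθ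

theorem exists_le_mul_rpow_of_le_mul_sub_rpow {r : ℕ → ℝ} {γ K : ℝ} (hγ0 : 0 < γ) (hγ1 : γ < 1)
    (hK : 0 < K) (hr : ∀ k, 0 ≤ r k) (hanti : Antitone r)
    (hstep : ∀ k, r (k + 1) ≤ K * (r k - r (k + 1)) ^ γ) :
    ∃ C, 0 < C ∧ ∀ k, 1 ≤ k → r k ≤ C * (k : ℝ) ^ (-(γ / (1 - γ))) := by
  have hθ : 1 < γ⁻¹ := one_lt_inv₀ hγ0 |>.2 hγ1
  have hexp : (γ⁻¹ - 1)⁻¹ = γ / (1 - γ) := by field_simp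
  rw [← hexp]
  refine exists_le_mul_rpow_of_rpow_le_mul_sub hθ (C₀ := K ^ γ⁻¹) (rpow_pos_of_pos hK _) hr
    fun k => ?_
  have hd : 0 ≤ r k - r (k + 1) := sub_nonneg.2 (hanti k.le_succ)
  calc r (k + 1) ^ γ⁻¹ ≤ (K * (r k - r (k + 1)) ^ γ) ^ γ⁻¹ :=
        rpow_le_rpow (hr _) (hstep k) (by positivity)
    _ = K ^ γ⁻¹ * (r k - r (k + 1)) := by
        rw [mul_rpow hK.le (by positivity), ← rpow_mul hd, mul_inv_cancel₀ hγ0.ne', rpow_one]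

theorem le_div_rpow_mul_rpow_of_kl {p : ℕ} {q σ A κ s D d F : ℝ} (hσ : 0 ≤ σ) (hA : 0 ≤ A)
    (hκ : 0 < κ) (hq : 0 ≤ q) (hs : 0 ≤ s) (hD : 0 ≤ D) (hsD : s ≤ A * D ^ p)
    (hF : F ≤ σ * s ^ q) (hdec : κ * D ^ (p + 1) ≤ d) :
    F ≤ σ * A ^ q / κ ^ (p * q / (p + 1)) * d ^ (p * q / (p + 1)) := by
  set γ : ℝ := p * q / (p + 1)
  have hd : 0 ≤ d := le_trans (by positivity) hdec
  have hpow : (A * D ^ p) ^ q = A ^ q * (D ^ (p + 1)) ^ γ := by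
    rw [mul_rpow hA (by positivity), ← rpow_natCast, ← rpow_natCast, ← rpow_mul hD,
      ← rpow_mul hD]
    congr 2
    push_cast
    exact (mul_div_cancel₀ _ (by positivity)).symm
  calc F ≤ σ * s ^ q := hF
    _ ≤ σ * (A * D ^ p) ^ q := by gcongr
    _ = σ * A ^ q * (D ^ (p + 1)) ^ γ := by rw [hpow]; ring
    _ ≤ σ * A ^ q * (d / κ) ^ γ := by
        gcongr
        rwa [le_div_iff₀' hκ]
    _ = σ * A ^ q / κ ^ γ * d ^ γ := by rw [div_rpow hd hκ.le]; ring

theorem le_rpow_mul_rpow_of_le {d d₀ γ : ℝ} (hd : 0 ≤ d) (hdd₀ : d ≤ d₀) (hγ : γ ≤ 1) :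
    d ≤ d₀ ^ (1 - γ) * d ^ γ :=
  calc d = d ^ (1 - γ) * d ^ γ := by rw [← rpow_add' hd (by simp), sub_add_cancel, rpow_one]
    _ ≤ d₀ ^ (1 - γ) * d ^ γ :=
        mul_le_mul_of_nonneg_right (rpow_le_rpow hd hdd₀ (by linarith)) (rpow_nonneg hd _)

theorem le_mul_rpow_of_reference_update {umin u a b F L d₀ γ : ℝ} (humin : 0 < umin)
    (hu : umin ≤ u ∧ u ≤ 1) (ha : 0 ≤ a) (hF0 : 0 ≤ F) (hb : b = (1 - u) * a + u * F)
    (hab : 0 ≤ a - b) (hd₀ : a - b ≤ d₀) (hγ : γ ≤ 1) (hF : F ≤ L * (a - b) ^ γ) :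
    b ≤ ((1 - umin) * d₀ ^ (1 - γ) + L) / umin * (a - b) ^ γ := by
  have hgap : umin * b ≤ (1 - umin) * (a - b) + F := by
    nlinarith [mul_le_mul_of_nonneg_right hu.1 ha, mul_le_mul_of_nonneg_right hu.2 hF0]
  have hd := mul_le_mul_of_nonneg_left (le_rpow_mul_rpow_of_le hab hd₀ hγ)
    (by linarith : 0 ≤ 1 - umin)
  rw [div_mul_eq_mul_div, le_div_iff₀' humin]
  linarith

theorem nhota_kl_sublinear_rate_general
    {E : Type*} [NormedAddCommGroup E]
    (p : ℕ) (hp : 1 ≤ p) (σ A c u_min fstar : ℝ) (q : ℝ)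
    (hσ : 0 < σ) (hA : 0 < A) (hc : 0 < c)
    (humin : 0 < u_min ∧ u_min ≤ 1)
    (hq : 0 < q ∧ q < ((p : ℝ) + 1) / p)
    (f : E → ℝ) (x : ℕ → E) (u R s : ℕ → ℝ)
    (hu : ∀ k : ℕ, u_min ≤ u (k + 1) ∧ u (k + 1) ≤ 1)
    (hRrec : ∀ k : ℕ, R (k + 1) = (1 - u (k + 1)) * R k + u (k + 1) * f (x (k + 1)))
    (hbound : ∀ k : ℕ, fstar ≤ f (x k) ∧ f (x k) ≤ R k)
    (hdec : ∀ k : ℕ, u_min * c * ‖x (k + 1) - x k‖ ^ (p + 1) ≤ R k - R (k + 1))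
    (hs : ∀ k : ℕ, 0 ≤ s (k + 1))
    (hsb : ∀ k : ℕ, s (k + 1) ≤ A * ‖x (k + 1) - x k‖ ^ p)
    (hkl : ∀ k : ℕ, f (x (k + 1)) - fstar ≤ σ * s (k + 1) ^ q) :
    ∃ C : ℝ, 0 < C ∧ ∀ k : ℕ, 1 ≤ k →
      f (x k) - fstar ≤ C * (k : ℝ) ^ (-((p : ℝ) * q / ((p : ℝ) + 1 - p * q))) := by
  obtain ⟨hq0, hqp⟩ := hq
  obtain ⟨humin0, humin1⟩ := humin
  have hp0 : (0 : ℝ) < p := by exact_mod_cast hp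
  set γ : ℝ := p * q / (p + 1) with hγ
  have hγ0 : 0 < γ := by positivity
  have hγ1 : γ < 1 := (div_lt_one (by positivity)).2 (by rw [lt_div_iff₀ hp0] at hqp; linarith)
  set r : ℕ → ℝ := fun k => R k - fstar
  have hr : ∀ k, 0 ≤ r k := fun k => by linarith [hbound k]
  have hdr : ∀ k, 0 ≤ r k - r (k + 1) := fun k => by
    have : 0 ≤ u_min * c * ‖x (k + 1) - x k‖ ^ (p + 1) := by positivity
    linarith [hdec k]
  have hanti : Antitone r := antitone_nat_of_succ_le fun k => sub_nonneg.1 (hdr k)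
  set L := σ * A ^ q / (u_min * c) ^ γ
  have hF : ∀ k, f (x (k + 1)) - fstar ≤ L * (r k - r (k + 1)) ^ γ := fun k =>
    le_div_rpow_mul_rpow_of_kl hσ.le hA.le (by positivity) hq0.le (hs k) (norm_nonneg _)
      (hsb k) (hkl k) (by simpa [r] using hdec k)
  have hK : 0 < ((1 - u_min) * r 0 ^ (1 - γ) + L) / u_min :=
    div_pos (add_pos_of_nonneg_of_pos
      (mul_nonneg (by linarith) (rpow_nonneg (hr 0) _)) (by positivity)) humin0
  obtain ⟨C, hC, hrate⟩ := exists_le_mul_rpow_of_le_mul_sub_rpow hγ0 hγ1 hK hr hanti fun k =>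
    le_mul_rpow_of_reference_update humin0 (hu k) (hr k) (by linarith [hbound (k + 1)])
      (by simp only [r, hRrec]; ring) (hdr k) (by linarith [hr (k + 1), hanti (Nat.zero_le k)])
      hγ1.le (hF k)
  have hexp : γ / (1 - γ) = p * q / (p + 1 - p * q) := by rw [hγ]; field_simp
  refine ⟨C, hC, fun k hk => ?_⟩
  rw [← hexp]
  linarith [hrate k hk, (hbound k).2]

/-- Theorem 5, case (2): under the KL-type inequality with exponent `q < (p+1)/p`, the
NHOTA function values converge to `f*` at the sublinear rate `O(k^(−pq/(p+1−pq)))`. -/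
theorem nhota_kl_sublinear_rate
    {E : Type*} [NormedAddCommGroup E] [InnerProductSpace ℝ E] [FiniteDimensional ℝ E]
    (p : ℕ) (hp : 1 ≤ p) (σ A c u_min fstar : ℝ) (q : ℝ)
    (hσ : 0 < σ) (hA : 0 < A) (hc : 0 < c)
    (humin : 0 < u_min ∧ u_min ≤ 1)
    (hq : 0 < q ∧ q < ((p : ℝ) + 1) / p)
    (f : E → ℝ) (x : ℕ → E) (u R s : ℕ → ℝ)
    (hu : ∀ k : ℕ, u_min ≤ u (k + 1) ∧ u (k + 1) ≤ 1)
    (hRrec : ∀ k : ℕ, R (k + 1) = (1 - u (k + 1)) * R k + u (k + 1) * f (x (k + 1)))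
    (hbound : ∀ k : ℕ, fstar ≤ f (x k) ∧ f (x k) ≤ R k)
    (hdec : ∀ k : ℕ, u_min * c * ‖x (k + 1) - x k‖ ^ (p + 1) ≤ R k - R (k + 1))
    (hs : ∀ k : ℕ, 0 ≤ s (k + 1))
    (hsb : ∀ k : ℕ, s (k + 1) ≤ A * ‖x (k + 1) - x k‖ ^ p)
    (hkl : ∀ k : ℕ, f (x (k + 1)) - fstar ≤ σ * s (k + 1) ^ q) :
    ∃ C : ℝ, 0 < C ∧ ∀ k : ℕ, 1 ≤ k →
      f (x k) - fstar ≤ C * (k : ℝ) ^ (-((p : ℝ) * q / ((p : ℝ) + 1 - p * q))) :=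
  nhota_kl_sublinear_rate_general p hp σ A c u_min fstar q hσ hA hc humin hq f x u R s hu hRrec
    hbound hdec hs hsb hkl
end

section
/- Let E be a finite-dimensional real inner product space, p ≥ 1 an integer, and let σ > 0, A > 0, c > 0, u_min ∈ (0,1], f* ∈ ℝ and q a real number with q ≥ (p+1)/p. Let f : E → ℝ and let x : ℕ → E, u, R, s : ℕ → ℝ satisfy for all k: u (k+1) ∈ [u_min, 1]; R (k+1) = (1 - u (k+1))·R k + u (k+1)·f(x (k+1)); f* ≤ f(x k) ≤ R k; R k - R (k+1) ≥ u_min·c·‖x (k+1) - x k‖^(p+1); s (k+1) ≥ 0 and s (k+1) ≤ A·‖x (k+1) - x k‖^p; and f(x (k+1)) - f* ≤ σ·(s (k+1))^q. Then there exist constants C > 0, ρ ∈ (0,1) and K ∈ ℕ such that f(x k) - f* ≤ C·ρ^k for all k ≥ K. -/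
/-!
With `r k = R k - f*`, sufficient decrease makes `r` nonincreasing and nonnegative, so its
decrements tend to `0`; hence eventually `‖x (k+1) - x k‖ ≤ 1`. There the KL inequality,
the bound on `s` and `p q ≥ p + 1` give `f (x (k+1)) - f* ≤ M (r k - r (k+1))` with
`M = σ A^q / (u_min c)`. Substituting this into the averaging recursion for `R` yields the
contraction `r (k+1) ≤ (1 - u_min / (1 + M)) r k`, and `f (x k) - f* ≤ r k`.
-/

open Filter Topology

lemma exists_pos_le_mul_pow_of_succ_le_mul {r : ℕ → ℝ} {ρ : ℝ} {K : ℕ} (hρ : 0 < ρ)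
    (h : ∀ k, K ≤ k → r (k + 1) ≤ ρ * r k) :
    ∃ C, 0 < C ∧ ∀ k, K ≤ k → r k ≤ C * ρ ^ k := by
  refine ⟨max (r K / ρ ^ K) 1, by positivity, fun k hk => ?_⟩
  obtain ⟨n, rfl⟩ := Nat.exists_eq_add_of_le hk
  have hgeom : r (K + n) ≤ ρ ^ n * r K :=
    le_geom (u := fun n => r (K + n)) hρ.le n fun m _ => h (K + m) (Nat.le_add_right K m)
  calc r (K + n) ≤ r K / ρ ^ K * ρ ^ (K + n) := by
        rwa [pow_add, ← mul_assoc, div_mul_cancel₀ _ (pow_ne_zero K hρ.ne'), mul_comm]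
    _ ≤ max (r K / ρ ^ K) 1 * ρ ^ (K + n) := by gcongr; exact le_max_left _ _

lemma Antitone.tendsto_sub_succ_zero {r : ℕ → ℝ} (h : Antitone r)
    (hb : BddBelow (Set.range r)) :
    Tendsto (fun k => r k - r (k + 1)) atTop (𝓝 0) := by
  have hconv := tendsto_atTop_ciInf h hb
  simpa using hconv.sub (hconv.comp (tendsto_add_atTop_nat 1))

lemma add_one_le_mul_of_add_one_div_le {p q : ℝ} (hp : 0 < p) (hq : (p + 1) / p ≤ q) :
    p + 1 ≤ p * q := by
  rwa [div_le_iff₀ hp, mul_comm] at hq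

lemma rpow_le_mul_pow_succ_of_le_mul_pow {s A d q : ℝ} {p : ℕ} (hs : 0 ≤ s) (hA : 0 ≤ A)
    (hd : 0 ≤ d) (hd1 : d ≤ 1) (hq : 0 ≤ q) (hpq : (p : ℝ) + 1 ≤ p * q)
    (hsd : s ≤ A * d ^ p) : s ^ q ≤ A ^ q * d ^ (p + 1) := by
  calc s ^ q ≤ (A * d ^ p) ^ q := Real.rpow_le_rpow hs hsd hq
    _ = A ^ q * d ^ ((p : ℝ) * q) := by
      rw [Real.mul_rpow hA (by positivity), ← Real.rpow_natCast d p, ← Real.rpow_mul hd]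
    _ ≤ A ^ q * d ^ ((p : ℝ) + 1) :=
      mul_le_mul_of_nonneg_left
        (Real.rpow_le_rpow_of_exponent_ge' hd hd1 (by positivity) hpq) (by positivity)
    _ = A ^ q * d ^ (p + 1) := by
      rw [← Real.rpow_natCast d (p + 1), Nat.cast_add_one]

lemma le_one_sub_div_mul_of_average_le_mul_sub {r r' e u u_min M : ℝ} (hM : 0 ≤ M)
    (hum : 0 ≤ u_min) (hum1 : u_min ≤ 1) (hu : u_min ≤ u) (hr : 0 ≤ r)
    (hrec : r' = (1 - u) * r + u * e) (he : e ≤ M * (r - r')) :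
    r' ≤ (1 - u_min / (1 + M)) * r := by
  have hu0 : 0 ≤ u := hum.trans hu
  have hgap : u * r ≤ (1 + u * M) * (r - r') := by
    nlinarith [mul_le_mul_of_nonneg_left he hu0]
  have hw : u_min * (1 + u * M) ≤ u * (1 + M) := by
    nlinarith [mul_le_mul_of_nonneg_left hum1 (mul_nonneg hu0 hM)]
  have hcross : u_min * r ≤ (r - r') * (1 + M) := by
    refine le_of_mul_le_mul_left ?_ (by positivity : 0 < 1 + u * M)
    calc (1 + u * M) * (u_min * r) = u_min * (1 + u * M) * r := by ring
      _ ≤ u * (1 + M) * r := mul_le_mul_of_nonneg_right hw hr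
      _ = u * r * (1 + M) := by ring
      _ ≤ (1 + u * M) * (r - r') * (1 + M) := mul_le_mul_of_nonneg_right hgap (by positivity)
      _ = (1 + u * M) * ((r - r') * (1 + M)) := by ring
  have hfrac : u_min / (1 + M) * r ≤ r - r' := by
    rwa [div_mul_eq_mul_div, div_le_iff₀ (by positivity)]
  linarith

theorem nhota_kl_linear_rate_general
    {E : Type*} [NormedAddCommGroup E]
    (p : ℕ) (hp : 1 ≤ p) (σ A c u_min fstar : ℝ) (q : ℝ)
    (hσ : 0 < σ) (hA : 0 < A) (hc : 0 < c)
    (humin : 0 < u_min ∧ u_min ≤ 1)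
    (hq : ((p : ℝ) + 1) / p ≤ q)
    (f : E → ℝ) (x : ℕ → E) (u R s : ℕ → ℝ)
    (hu : ∀ k : ℕ, u_min ≤ u (k + 1) ∧ u (k + 1) ≤ 1)
    (hRrec : ∀ k : ℕ, R (k + 1) = (1 - u (k + 1)) * R k + u (k + 1) * f (x (k + 1)))
    (hbound : ∀ k : ℕ, fstar ≤ f (x k) ∧ f (x k) ≤ R k)
    (hdec : ∀ k : ℕ, u_min * c * ‖x (k + 1) - x k‖ ^ (p + 1) ≤ R k - R (k + 1))
    (hs : ∀ k : ℕ, 0 ≤ s (k + 1))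
    (hsb : ∀ k : ℕ, s (k + 1) ≤ A * ‖x (k + 1) - x k‖ ^ p)
    (hkl : ∀ k : ℕ, f (x (k + 1)) - fstar ≤ σ * s (k + 1) ^ q) :
    ∃ C : ℝ, 0 < C ∧ ∃ ρ : ℝ, 0 < ρ ∧ ρ < 1 ∧ ∃ K : ℕ,
      ∀ k : ℕ, K ≤ k → f (x k) - fstar ≤ C * ρ ^ k := by
  obtain ⟨hum0, hum1⟩ := humin
  have hpq := add_one_le_mul_of_add_one_div_le (by exact_mod_cast hp) hq
  have hq0 : 0 ≤ q := le_trans (by positivity) hq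
  set r : ℕ → ℝ := fun k => R k - fstar with hr
  have hr0 : ∀ k, 0 ≤ r k := fun k => by linarith [hbound k]
  have hrdec : ∀ k, u_min * c * ‖x (k + 1) - x k‖ ^ (p + 1) ≤ r k - r (k + 1) := fun k => by
    linarith [hdec k]
  have hanti : Antitone r := antitone_nat_of_succ_le fun k => by
    linarith [hrdec k, show 0 ≤ u_min * c * ‖x (k + 1) - x k‖ ^ (p + 1) by positivity]
  have hβ : 0 < u_min * c := by positivity
  obtain ⟨K, hK⟩ := eventually_atTop.mp
    ((hanti.tendsto_sub_succ_zero ⟨0, Set.forall_mem_range.2 hr0⟩).eventually_lt_const hβ)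
  set M := σ * A ^ q / (u_min * c)
  have hM : 0 < M := by positivity
  have hstep : ∀ k, K ≤ k → r (k + 1) ≤ (1 - u_min / (1 + M)) * r k := fun k hk => by
    have hd1 : ‖x (k + 1) - x k‖ ≤ 1 := by
      refine (pow_le_one_iff_of_nonneg (norm_nonneg _) (Nat.add_one_ne_zero p)).1 ?_
      exact (mul_le_iff_le_one_right hβ).1 (by linarith [hrdec k, hK k hk])
    have hgap : f (x (k + 1)) - fstar ≤ M * (r k - r (k + 1)) := calc
      _ ≤ σ * (A ^ q * ‖x (k + 1) - x k‖ ^ (p + 1)) := (hkl k).trans <| by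
        gcongr
        exact rpow_le_mul_pow_succ_of_le_mul_pow (hs k) hA.le (norm_nonneg _) hd1 hq0 hpq (hsb k)
      _ ≤ σ * (A ^ q * ((r k - r (k + 1)) / (u_min * c))) := by
        gcongr
        rw [le_div_iff₀ hβ, mul_comm]
        exact hrdec k
      _ = M * (r k - r (k + 1)) := by ring
    exact le_one_sub_div_mul_of_average_le_mul_sub hM.le hum0.le hum1 (hu k).1 (hr0 k)
      (by simp only [hr, hRrec k]; ring) hgap
  have hθ : 0 < u_min / (1 + M) ∧ u_min / (1 + M) < 1 :=
    ⟨by positivity, (div_lt_one (by positivity)).2 (by linarith)⟩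
  obtain ⟨C, hC, hCr⟩ := exists_pos_le_mul_pow_of_succ_le_mul (by linarith) hstep
  refine ⟨C, hC, 1 - u_min / (1 + M), by linarith, by linarith, K, fun k hk => ?_⟩
  linarith [hbound k, hCr k hk]

/-- Theorem 5, case (1): under the KL-type inequality with exponent `q ≥ (p+1)/p`, the
NHOTA function values converge to `f*` linearly. -/
theorem nhota_kl_linear_rate
    {E : Type*} [NormedAddCommGroup E] [InnerProductSpace ℝ E] [FiniteDimensional ℝ E]
    (p : ℕ) (hp : 1 ≤ p) (σ A c u_min fstar : ℝ) (q : ℝ)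
    (hσ : 0 < σ) (hA : 0 < A) (hc : 0 < c)
    (humin : 0 < u_min ∧ u_min ≤ 1)
    (hq : ((p : ℝ) + 1) / p ≤ q)
    (f : E → ℝ) (x : ℕ → E) (u R s : ℕ → ℝ)
    (hu : ∀ k : ℕ, u_min ≤ u (k + 1) ∧ u (k + 1) ≤ 1)
    (hRrec : ∀ k : ℕ, R (k + 1) = (1 - u (k + 1)) * R k + u (k + 1) * f (x (k + 1)))
    (hbound : ∀ k : ℕ, fstar ≤ f (x k) ∧ f (x k) ≤ R k)
    (hdec : ∀ k : ℕ, u_min * c * ‖x (k + 1) - x k‖ ^ (p + 1) ≤ R k - R (k + 1))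
    (hs : ∀ k : ℕ, 0 ≤ s (k + 1))
    (hsb : ∀ k : ℕ, s (k + 1) ≤ A * ‖x (k + 1) - x k‖ ^ p)
    (hkl : ∀ k : ℕ, f (x (k + 1)) - fstar ≤ σ * s (k + 1) ^ q) :
    ∃ C : ℝ, 0 < C ∧ ∃ ρ : ℝ, 0 < ρ ∧ ρ < 1 ∧ ∃ K : ℕ,
      ∀ k : ℕ, K ≤ k → f (x k) - fstar ≤ C * ρ ^ k :=
  nhota_kl_linear_rate_general p hp σ A c u_min fstar q hσ hA hc humin hq f x u R s hu hRrec hbound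
    hdec hs hsb hkl
end

section
/- Let p ≥ 1 be an integer and let μ : ℕ → ℝ be a nonnegative sequence satisfying μ (k+1) + (μ (k+1))^((p+1)/p) ≤ μ k for all k ≥ 0. Then for all k ≥ 1: μ k ≤ ((1 + p)·(1 + (μ 0)^(1/p)))^p / k^p. -/
/-!
With `ν k = μ k ^ (1 / p)` the recurrence reads `ν (k+1) ^ p * (1 + ν (k+1)) ≤ ν k ^ p`.
Bernoulli's inequality for `ν (k+1) / ν k` turns this into
`1 / ν (k+1) - 1 / ν k ≥ 1 / (p * (1 + ν (k+1))) ≥ 1 / (p * (1 + ν 0))`,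
so `1 / ν k` grows at least linearly: `ν k ≤ p * (1 + ν 0) / k`, and `μ k = ν k ^ p`.
-/

theorem inv_add_inv_le_inv_of_pow_mul_one_add_le {p : ℕ} {a b : ℝ} (ha : 0 < a) (hb : 0 < b)
    (h : a ^ p * (1 + a) ≤ b ^ p) : b⁻¹ + (p * (1 + a))⁻¹ ≤ a⁻¹ := by
  set x := a / b with hx
  have hxp : x ^ p * (1 + a) ≤ 1 := by
    rwa [hx, div_pow, div_mul_eq_mul_div, div_le_one (by positivity)]
  have bernoulli : 1 + p * (x - 1) ≤ x ^ p := by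
    simpa using one_add_mul_le_pow (a := x - 1) (by linarith [show 0 ≤ x by positivity]) p
  have key : a ≤ p * (1 + a) * (1 - x) := by nlinarith
  have hpa : 0 < (p : ℝ) * (1 + a) := by
    refine mul_pos (lt_of_le_of_ne p.cast_nonneg fun hp => ?_) (by positivity)
    rw [← hp] at key
    linarith
  have hdiff : a⁻¹ - b⁻¹ = (1 - x) / a := by
    rw [hx]
    field_simp
  rw [← le_sub_iff_add_le', hdiff, le_div_iff₀ ha, inv_mul_le_iff₀ hpa]
  exact key

section PowMulOneAddLe

variable {p : ℕ} {ν : ℕ → ℝ}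

theorem antitone_of_pow_mul_one_add_le (hp : p ≠ 0) (hν : ∀ k, 0 ≤ ν k)
    (hrec : ∀ k, ν (k + 1) ^ p * (1 + ν (k + 1)) ≤ ν k ^ p) : Antitone ν := by
  refine antitone_nat_of_succ_le fun k => ?_
  refine (pow_le_pow_iff_left₀ (hν _) (hν k) hp).1 ?_
  calc ν (k + 1) ^ p ≤ ν (k + 1) ^ p * (1 + ν (k + 1)) :=
        le_mul_of_one_le_right (pow_nonneg (hν _) p) (by linarith [hν (k + 1)])
    _ ≤ ν k ^ p := hrec k

theorem nat_mul_le_of_pow_mul_one_add_le (hp : p ≠ 0) (hν : ∀ k, 0 ≤ ν k)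
    (hrec : ∀ k, ν (k + 1) ^ p * (1 + ν (k + 1)) ≤ ν k ^ p) (n : ℕ) :
    n * ν n ≤ p * (1 + ν 0) := by
  have hanti := antitone_of_pow_mul_one_add_le hp hν hrec
  have hB : 0 < (p : ℝ) * (1 + ν 0) :=
    mul_pos (mod_cast Nat.pos_of_ne_zero hp) (by linarith [hν 0])
  rcases (hν n).eq_or_lt with hn | hn
  · rw [← hn, mul_zero]
    exact hB.le
  have growth : ∀ k ≤ n, k * (p * (1 + ν 0))⁻¹ ≤ (ν k)⁻¹ := by
    intro k hk
    induction k with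
    | zero => simpa using hν 0
    | succ k ih =>
      have hpos : 0 < ν (k + 1) := hn.trans_le (hanti hk)
      have step := inv_add_inv_le_inv_of_pow_mul_one_add_le hpos
        (hpos.trans_le (hanti k.le_succ)) (hrec k)
      have hmono : (p * (1 + ν 0))⁻¹ ≤ (p * (1 + ν (k + 1)))⁻¹ := by
        gcongr
        exact hanti (Nat.zero_le _)
      push_cast
      linarith [ih (by omega)]
  have := growth n le_rfl
  rwa [← div_eq_mul_inv, div_le_iff₀ hB, inv_mul_eq_div, le_div_iff₀ hn] at this

end PowMulOneAddLe

/-- Lemma A.1 of Nesterov (with α = 1/p): a nonnegative sequence satisfying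
`μ (k+1) + μ (k+1)^((p+1)/p) ≤ μ k` decays like `O(k^(−p))`. -/
theorem nesterov_recurrence_rate
    (p : ℕ) (hp : 1 ≤ p) (μ : ℕ → ℝ) (hnn : ∀ k : ℕ, 0 ≤ μ k)
    (hrec : ∀ k : ℕ, μ (k + 1) + μ (k + 1) ^ (((p : ℝ) + 1) / p) ≤ μ k) :
    ∀ k : ℕ, 1 ≤ k →
      μ k ≤ ((1 + (p : ℝ)) * (1 + μ 0 ^ (1 / (p : ℝ)))) ^ p / (k : ℝ) ^ p := by
  intro k hk
  have hp0 : p ≠ 0 := by omega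
  set ν : ℕ → ℝ := fun j => μ j ^ (1 / (p : ℝ)) with hν_def
  have hν : ∀ k, 0 ≤ ν k := fun k => Real.rpow_nonneg (hnn k) _
  have hμ : ∀ k, μ k = ν k ^ p := fun k => by
    rw [hν_def, one_div, Real.rpow_inv_natCast_pow (hnn k) hp0]
  have hνrec : ∀ k, ν (k + 1) ^ p * (1 + ν (k + 1)) ≤ ν k ^ p := fun k => by
    have hexp : ((p : ℝ) + 1) / p = 1 + 1 / p := by field_simp
    have := hrec k
    rw [hexp, Real.rpow_add' (hnn _) (by positivity), Real.rpow_one] at this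
    rw [← hμ, ← hμ]
    linarith
  have hk0 : (0 : ℝ) < k := by exact_mod_cast hk
  have hbound : ν k ≤ (1 + p) * (1 + ν 0) / k := by
    rw [le_div_iff₀ hk0, mul_comm]
    linarith [nat_mul_le_of_pow_mul_one_add_le hp0 hν hνrec k, hν 0]
  calc μ k = ν k ^ p := hμ k
    _ ≤ ((1 + p) * (1 + ν 0) / k) ^ p := pow_le_pow_left₀ (hν k) hbound p
    _ = _ := div_pow _ _ _
end

section
/- Let E be a finite-dimensional real inner product space, p ≥ 1 an integer, and let D > 0, A > 0, c > 0, u_min ∈ (0,1] and f* ∈ ℝ. Let f : E → ℝ and let x : ℕ → E, u, R, s : ℕ → ℝ satisfy for all k: u (k+1) ∈ [u_min, 1]; R (k+1) = (1 - u (k+1))·R k + u (k+1)·f(x (k+1)); δ k := R k - f* ≥ 0; R k - R (k+1) ≥ u_min·c·‖x (k+1) - x k‖^(p+1); s (k+1) ≥ 0 and s (k+1) ≤ A·‖x (k+1) - x k‖^p; and f(x (k+1)) - f* ≤ D·s (k+1). Then for all k: u_min·δ (k+1) ≤ (δ k - δ (k+1)) + C·(δ k - δ (k+1))^(p/(p+1)),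 where C = D·A/(u_min·c)^(p/(p+1)). -/
/-- Key recurrence in the proof of Theorem 3 (convex case): the gap `δ k = R k - f*`
satisfies `u_min·δ (k+1) ≤ (δ k - δ (k+1)) + C·(δ k - δ (k+1))^(p/(p+1))` with
`C = D·A/(u_min·c)^(p/(p+1))`. -/
theorem nhota_convex_recurrence
    {E : Type*} [NormedAddCommGroup E] [InnerProductSpace ℝ E] [FiniteDimensional ℝ E]
    (p : ℕ) (hp : 1 ≤ p) (D A c u_min fstar : ℝ)
    (hD : 0 < D) (hA : 0 < A) (hc : 0 < c)
    (humin : 0 < u_min ∧ u_min ≤ 1)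
    (f : E → ℝ) (x : ℕ → E) (u R s : ℕ → ℝ)
    (hu : ∀ k : ℕ, u_min ≤ u (k + 1) ∧ u (k + 1) ≤ 1)
    (hRrec : ∀ k : ℕ, R (k + 1) = (1 - u (k + 1)) * R k + u (k + 1) * f (x (k + 1)))
    (hδ : ∀ k : ℕ, 0 ≤ R k - fstar)
    (hdec : ∀ k : ℕ, u_min * c * ‖x (k + 1) - x k‖ ^ (p + 1) ≤ R k - R (k + 1))
    (hs : ∀ k : ℕ, 0 ≤ s (k + 1))
    (hsb : ∀ k : ℕ, s (k + 1) ≤ A * ‖x (k + 1) - x k‖ ^ p)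
    (hsub : ∀ k : ℕ, f (x (k + 1)) - fstar ≤ D * s (k + 1)) :
    ∀ k : ℕ,
      u_min * (R (k + 1) - fstar) ≤
        ((R k - fstar) - (R (k + 1) - fstar)) +
          (D * A / (u_min * c) ^ ((p : ℝ) / (p + 1))) *
            ((R k - fstar) - (R (k + 1) - fstar)) ^ ((p : ℝ) / (p + 1)) := by
  intro k
  set d : ℝ := ‖x (k + 1) - x k‖ with hdd
  have hdnn : 0 ≤ d := norm_nonneg _
  have huc : 0 < u_min * c := mul_pos humin.1 hc
  have hΔd : u_min * c * d ^ (p + 1) ≤ R k - R (k + 1) := hdec k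
  have hΔnn : 0 ≤ R k - R (k + 1) := le_trans (by positivity) hΔd
  set Δ : ℝ := R k - R (k + 1) with hΔdef
  have he : (0 : ℝ) ≤ (p : ℝ) / (p + 1) := by positivity
  have h1 : d ^ (p + 1) ≤ Δ / (u_min * c) := (le_div_iff₀' huc).2 hΔd
  have h2 : d ^ p = ((d : ℝ) ^ (p + 1)) ^ ((p : ℝ) / (p + 1)) := by
    rw [← Real.rpow_natCast d (p + 1), ← Real.rpow_mul hdnn, ← Real.rpow_natCast d p]
    congr 1
    have : ((p : ℝ) + 1) ≠ 0 := by positivity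
    push_cast
    field_simp
  have h3 : (d ^ (p + 1)) ^ ((p : ℝ) / (p + 1)) ≤ (Δ / (u_min * c)) ^ ((p : ℝ) / (p + 1)) :=
    Real.rpow_le_rpow (by positivity) h1 he
  have h4 : (Δ / (u_min * c)) ^ ((p : ℝ) / (p + 1))
      = Δ ^ ((p : ℝ) / (p + 1)) / (u_min * c) ^ ((p : ℝ) / (p + 1)) :=
    Real.div_rpow hΔnn (le_of_lt huc) _
  have hkey : D * A * d ^ p ≤ (D * A / (u_min * c) ^ ((p : ℝ) / (p + 1))) * Δ ^ ((p : ℝ) / (p + 1)) := by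
    rw [h2]
    calc D * A * ((d ^ (p + 1)) ^ ((p : ℝ) / (p + 1)))
        ≤ D * A * ((Δ / (u_min * c)) ^ ((p : ℝ) / (p + 1))) := by
          apply mul_le_mul_of_nonneg_left h3 (by positivity)
      _ = (D * A / (u_min * c) ^ ((p : ℝ) / (p + 1))) * Δ ^ ((p : ℝ) / (p + 1)) := by
          rw [h4]; ring
  have hrec := hRrec k
  have hu1 := (hu k).1
  have hu2 := (hu k).2
  have hδ1 := hδ (k + 1)
  have hsk := hs k
  have hsbk := hsb k
  have hsubk := hsub k
  have hunn : 0 ≤ u (k + 1) := le_trans (le_of_lt humin.1) hu1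
  -- u(k+1) * (R k - fstar) = Δ + u(k+1) * (f (x (k+1)) - fstar)
  have hid : u (k + 1) * (R k - fstar) = Δ + u (k + 1) * (f (x (k + 1)) - fstar) := by
    rw [hΔdef, hrec]; ring
  rw [← hdd] at hsbk
  have hgoal : R k - fstar - (R (k + 1) - fstar) = Δ := by rw [hΔdef]; ring
  rw [hgoal]
  nlinarith [mul_nonneg hunn hΔnn, mul_nonneg (sub_nonneg.2 hu1) hδ1,
    mul_nonneg (sub_nonneg.2 hu2) (mul_nonneg hD.le hsk),
    mul_le_mul_of_nonneg_left hsubk hunn,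
    mul_le_mul_of_nonneg_left hsbk hD.le]
end

section
/- Let p ≥ 1 be an integer and let u_min ∈ (0,1] and C > 0. Let δ : ℕ → ℝ be a nonnegative nonincreasing sequence such that for all k: u_min·δ (k+1) ≤ (δ k - δ (k+1)) + C·(δ k - δ (k+1))^(p/(p+1)), and suppose δ k - δ (k+1) < 1 for all k. Then for all k ≥ 1: δ k ≤ ((1+C)/u_min)^(p+1) · ((1 + p)·(1 + μ0^(1/p)))^p / k^p, where μ0 = (u_min/(1+C))^(p+1)·δ 0. -/
/-!
With `c = u_min / (1 + C)`, a gap `x = δ k - δ (k + 1) ∈ [0, 1)` satisfies `x ≤ x ^ (p / (p + 1))`,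
so the recurrence gives `(c * δ (k + 1)) ^ (p + 1) ≤ x ^ p`. For `b k = (c ^ (p + 1) * δ k) ^ (1 / p)`
this reads `b (k + 1) ^ p * (1 + b (k + 1)) ≤ b k ^ p`, and Bernoulli's inequality turns it into
`1 / b (k + 1) ≥ 1 / b k + 1 / ((1 + p) * (1 + b 0))`. Hence `k * b k ≤ (1 + p) * (1 + b 0)`,
and raising to the `p`-th power gives the rate.
-/

theorem inv_add_le_inv_of_pow_mul_one_add_le {p : ℕ} {a β T : ℝ} (ha : 0 < a) (hβ : 0 < β)
    (hβT : β ≤ T) (h : β ^ p * (1 + β) ≤ a ^ p) :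
    a⁻¹ + ((1 + p) * (1 + T))⁻¹ ≤ β⁻¹ := by
  set t := β / a with ht
  have hbern : 1 + p * (t - 1) ≤ t ^ p := by
    simpa using one_add_mul_le_pow (by linarith [show 0 ≤ t by positivity] : (-2 : ℝ) ≤ t - 1) p
  have htp : t ^ p * (1 + β) ≤ 1 := by
    rwa [ht, div_pow, div_mul_eq_mul_div, div_le_one (pow_pos ha p)]
  have hβp : β ≤ p * (1 + β) * (1 - t) := by nlinarith
  have ht1 : 0 ≤ 1 - t := by
    by_contra! ht1
    nlinarith [mul_nonneg (Nat.cast_nonneg p) (by linarith : (0 : ℝ) ≤ 1 + β)]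
  have hT : 0 < 1 + T := by linarith
  have hD : β ≤ (1 + p) * (1 + T) * (1 - t) :=
    hβp.trans (by gcongr; linarith)
  have hDinv : ((1 + p) * (1 + T))⁻¹ ≤ (1 - t) * β⁻¹ := by
    rw [← div_eq_mul_inv, le_div_iff₀ hβ, ← div_eq_inv_mul, div_le_iff₀ (by positivity)]
    linarith
  have hat : a⁻¹ = t * β⁻¹ := by rw [ht]; field_simp
  linarith

theorem natCast_mul_le_of_pow_mul_one_add_le {p : ℕ} (hp : p ≠ 0) {b : ℕ → ℝ}
    (hb : ∀ k, 0 ≤ b k) (hrec : ∀ k, b (k + 1) ^ p * (1 + b (k + 1)) ≤ b k ^ p) (k : ℕ) :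
    k * b k ≤ (1 + p) * (1 + b 0) := by
  have hanti : Antitone b := antitone_nat_of_succ_le fun k =>
    (pow_le_pow_iff_left₀ (hb _) (hb _) hp).1 <|
      (le_mul_of_one_le_right (pow_nonneg (hb _) _) (by linarith [hb (k + 1)])).trans (hrec k)
  have hD : 0 < (1 + p : ℝ) * (1 + b 0) := by have := hb 0; positivity
  induction k with
  | zero => simpa using hD.le
  | succ k ih =>
    rcases (hb (k + 1)).eq_or_lt with hzero | hpos
    · rw [← hzero, mul_zero]
      exact hD.le
    · have hbk : 0 < b k := hpos.trans_le (hanti k.le_succ)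
      have hinv := mul_le_mul_of_nonneg_left
        (inv_add_le_inv_of_pow_mul_one_add_le hbk hpos (hanti (Nat.zero_le _)) (hrec k)) hD.le
      rw [mul_add, mul_inv_cancel₀ hD.ne'] at hinv
      rw [← le_div_iff₀ hbk, div_eq_mul_inv] at ih
      rw [← le_div_iff₀ hpos, div_eq_mul_inv]
      push_cast
      linarith

theorem pow_succ_le_pow_of_le_add_mul_rpow {p : ℕ} {u C x y : ℝ} (hu : 0 ≤ u) (hC : 0 < 1 + C)
    (hy : 0 ≤ y) (hx₀ : 0 ≤ x) (hx₁ : x ≤ 1) (h : u * y ≤ x + C * x ^ ((p : ℝ) / (p + 1))) :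
    (u / (1 + C) * y) ^ (p + 1) ≤ x ^ p := by
  have hx : x ≤ x ^ ((p : ℝ) / (p + 1)) :=
    Real.self_le_rpow_of_le_one hx₀ hx₁ (div_le_one_of_le₀ (by linarith) (by positivity))
  have hle : u / (1 + C) * y ≤ x ^ ((p : ℝ) / (p + 1)) := by
    rw [div_mul_eq_mul_div, div_le_iff₀ hC]
    linarith
  calc (u / (1 + C) * y) ^ (p + 1) ≤ (x ^ ((p : ℝ) / (p + 1))) ^ (p + 1) := by gcongr
    _ = x ^ p := by
      rw [← Real.rpow_natCast, ← Real.rpow_mul hx₀]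
      push_cast
      rw [div_mul_cancel₀ _ (by positivity), Real.rpow_natCast]

theorem pow_mul_one_add_le_pow_of_pow_succ_le {p : ℕ} (hp : p ≠ 0) {c d d' b b' : ℝ}
    (hc : 0 ≤ c) (hb : b ^ p = c ^ (p + 1) * d) (hb' : b' ^ p = c ^ (p + 1) * d') (hd : d' ≤ d)
    (h : (c * d') ^ (p + 1) ≤ (d - d') ^ p) :
    b' ^ p * (1 + b') ≤ b ^ p := by
  have hpow : b' ^ (p + 1) ≤ c ^ (p + 1) * (d - d') := by
    refine le_of_pow_le_pow_left₀ hp (by have := sub_nonneg.2 hd; positivity) ?_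
    calc (b' ^ (p + 1)) ^ p = (c ^ p) ^ (p + 1) * (c * d') ^ (p + 1) := by
          rw [← pow_mul, mul_comm, pow_mul, hb']; ring
      _ ≤ (c ^ p) ^ (p + 1) * (d - d') ^ p := by gcongr
      _ = (c ^ (p + 1) * (d - d')) ^ p := by rw [mul_pow, ← pow_mul, ← pow_mul, Nat.mul_comm]
  calc b' ^ p * (1 + b') = b' ^ p + b' ^ (p + 1) := by ring
    _ ≤ c ^ (p + 1) * d' + c ^ (p + 1) * (d - d') := by rw [hb']; gcongr
    _ = b ^ p := by rw [hb]; ring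

/-- Theorem 3, case (2): when the successive gaps are smaller than 1, the recurrence
yields the sublinear rate `O(k^(−p))` after rescaling by `μ0 = (u_min/(1+C))^(p+1)·δ 0`. -/
theorem nhota_convex_sublinear_case
    (p : ℕ) (hp : 1 ≤ p) (u_min C : ℝ)
    (humin : 0 < u_min ∧ u_min ≤ 1) (hC : 0 < C)
    (δ : ℕ → ℝ) (hnn : ∀ k : ℕ, 0 ≤ δ k) (hmono : ∀ k : ℕ, δ (k + 1) ≤ δ k)
    (hrec : ∀ k : ℕ, u_min * δ (k + 1) ≤
      (δ k - δ (k + 1)) + C * (δ k - δ (k + 1)) ^ ((p : ℝ) / (p + 1)))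
    (hgap : ∀ k : ℕ, δ k - δ (k + 1) < 1) :
    ∀ k : ℕ, 1 ≤ k →
      δ k ≤ ((1 + C) / u_min) ^ (p + 1) *
        ((1 + (p : ℝ)) * (1 + ((u_min / (1 + C)) ^ (p + 1) * δ 0) ^ (1 / (p : ℝ)))) ^ p /
          (k : ℝ) ^ p := by
  intro k _
  have hp₀ : p ≠ 0 := by omega
  have hc : 0 < u_min / (1 + C) := div_pos humin.1 (by linarith)
  set c := u_min / (1 + C)
  set b : ℕ → ℝ := fun k => (c ^ (p + 1) * δ k) ^ (1 / (p : ℝ)) with hb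
  have hb₀ : ∀ k, 0 ≤ b k := fun k => by have := hnn k; positivity
  have hbp : ∀ k, b k ^ p = c ^ (p + 1) * δ k := fun k => by
    rw [hb, one_div, Real.rpow_inv_natCast_pow (by have := hnn k; positivity) hp₀]
  have hstep : ∀ k, b (k + 1) ^ p * (1 + b (k + 1)) ≤ b k ^ p := fun k =>
    pow_mul_one_add_le_pow_of_pow_succ_le hp₀ hc.le (hbp k) (hbp (k + 1)) (hmono k) <|
      pow_succ_le_pow_of_le_add_mul_rpow humin.1.le (by linarith) (hnn _)
        (sub_nonneg.2 (hmono k)) (hgap k).le (hrec k)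
  have hrate : ((k : ℝ) * b k) ^ p ≤ ((1 + p) * (1 + b 0)) ^ p :=
    pow_le_pow_left₀ (by have := hb₀ k; positivity)
      (natCast_mul_le_of_pow_mul_one_add_le hp₀ hb₀ hstep k) p
  rw [mul_pow, hbp] at hrate
  rw [← inv_div u_min, inv_pow, le_div_iff₀ (by positivity)]
  calc δ k * (k : ℝ) ^ p = (c ^ (p + 1))⁻¹ * ((k : ℝ) ^ p * (c ^ (p + 1) * δ k)) := by
        field_simp
    _ ≤ (c ^ (p + 1))⁻¹ * ((1 + p) * (1 + b 0)) ^ p := by gcongr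
end

section
/- Let E be a finite-dimensional real inner product space, p ≥ 1 an integer, F : E → ℝ a p-times continuously differentiable function, and h : E → ℝ a function bounded below by an affine function, i.e., there exist a ∈ E and b ∈ ℝ with h(y) ≥ ⟨a, y⟩ + b for all y ∈ E. Fix x ∈ E and let T_p^F(y; x) = Σ_{i=0}^p (1/i!)·D^i F(x)[y - x]^i denote the p-th order Taylor polynomial of F at x. Let (M_i) be a sequence of positive reals with M_i → ∞ and let (y_i) be a sequence in E satisfying, for every i, T_p^F(y_i; x) + (M_i/(p+1)!)·‖y_i - x‖^(p+1) + h(y_i) ≤ F(x) + h(x). Then ‖y_i - x‖ → 0 as i → ∞. -/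
/-!
The model-decrease condition bounds `(M / (p+1)!) ‖y - x‖^(p+1)` by
`F x + h x - b - ⟪a, y⟫ - T_p^F(y; x)`, whose growth is at most `K (1 + ‖y - x‖)^(p+1)` with `K`
independent of `M` and `y`. Hence `s = ‖y - x‖ / (1 + ‖y - x‖)` satisfies `M s^(p+1) ≤ K`, so
`s → 0` as `M → ∞`, and then `‖y - x‖ → 0`.
-/

open scoped BigOperators

/-- The p-th order Taylor polynomial `T_p^F(y; x) = Σ_{i=0}^p (1/i!)·D^i F(x)[y - x]^i`. -/
noncomputable def taylorPoly {E : Type*} [NormedAddCommGroup E] [InnerProductSpace ℝ E]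
    (p : ℕ) (F : E → ℝ) (x y : E) : ℝ :=
  ∑ i ∈ Finset.range (p + 1),
    (1 / (Nat.factorial i : ℝ)) * iteratedFDeriv ℝ i F x (fun _ => y - x)

open Filter Topology
open scoped Nat

lemma pow_le_one_add_pow {r : ℝ} (hr : 0 ≤ r) {j n : ℕ} (hjn : j ≤ n) :
    r ^ j ≤ (1 + r) ^ n :=
  (pow_le_pow_left₀ hr (by linarith) j).trans (pow_le_pow_right₀ (by linarith) hjn)

section

variable {E : Type*} [NormedAddCommGroup E] [InnerProductSpace ℝ E]

lemma abs_taylorPoly_le (p : ℕ) (F : E → ℝ) (x y : E) :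
    |taylorPoly p F x y| ≤
      (∑ j ∈ Finset.range (p + 1), ‖iteratedFDeriv ℝ j F x‖ / j !) *
        (1 + ‖y - x‖) ^ p := by
  rw [taylorPoly, Finset.sum_mul]
  refine (Finset.abs_sum_le_sum_abs _ _).trans (Finset.sum_le_sum fun j hj => ?_)
  have hterm : |iteratedFDeriv ℝ j F x (fun _ => y - x)| ≤
      ‖iteratedFDeriv ℝ j F x‖ * ‖y - x‖ ^ j := by
    simpa [Finset.prod_const] using (iteratedFDeriv ℝ j F x).le_opNorm (fun _ => y - x)
  have hpow : ‖y - x‖ ^ j ≤ (1 + ‖y - x‖) ^ p :=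
    pow_le_one_add_pow (norm_nonneg _) (Nat.lt_succ_iff.mp (Finset.mem_range.mp hj))
  calc |1 / (j ! : ℝ) * iteratedFDeriv ℝ j F x (fun _ => y - x)|
      = |iteratedFDeriv ℝ j F x (fun _ => y - x)| / j ! := by
        rw [abs_mul, abs_of_pos (by positivity)]; ring
    _ ≤ ‖iteratedFDeriv ℝ j F x‖ * (1 + ‖y - x‖) ^ p / j ! := by
        gcongr
        exact hterm.trans (by gcongr)
    _ = _ := by ring

lemma neg_inner_le_mul_one_add_norm_sub (a x y : E) :
    -inner ℝ a y ≤ ‖a‖ * (‖x‖ + 1) * (1 + ‖y - x‖) := by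
  have hy : ‖y‖ ≤ ‖x‖ + ‖y - x‖ := by simpa using norm_add_le x (y - x)
  calc -inner ℝ a y ≤ ‖a‖ * ‖y‖ := by simpa using real_inner_le_norm a (-y)
    _ ≤ ‖a‖ * (‖x‖ + ‖y - x‖) := by gcongr
    _ ≤ ‖a‖ * (‖x‖ + 1) * (1 + ‖y - x‖) := by
        rw [mul_assoc]; gcongr; nlinarith [norm_nonneg x, norm_nonneg (y - x)]

lemma exists_mul_pow_le_of_model_decrease (p : ℕ) (F h : E → ℝ) {a : E} {b : ℝ}
    (haff : ∀ y, inner ℝ a y + b ≤ h y) (x : E) :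
    ∃ K : ℝ, ∀ (m : ℝ) (y : E),
      taylorPoly p F x y + m / (p + 1)! * ‖y - x‖ ^ (p + 1) + h y ≤ F x + h x →
        m * ‖y - x‖ ^ (p + 1) ≤ K * (1 + ‖y - x‖) ^ (p + 1) := by
  set C₁ := ∑ j ∈ Finset.range (p + 1), ‖iteratedFDeriv ℝ j F x‖ / (j ! : ℝ)
  set C := C₁ + ‖a‖ * (‖x‖ + 1) + |F x + h x - b|
  refine ⟨(p + 1)! * C, fun m y hy => ?_⟩
  set r := ‖y - x‖
  have hC₁ : 0 ≤ C₁ := Finset.sum_nonneg fun j _ => by positivity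
  have h1 : 1 ≤ (1 + r) ^ (p + 1) := one_le_pow₀ (by simp [r])
  have hlin : 1 + r ≤ (1 + r) ^ (p + 1) := by
    simpa using pow_le_pow_right₀ (by simp [r] : (1 : ℝ) ≤ 1 + r) (Nat.le_add_left 1 p)
  have hT : -taylorPoly p F x y ≤ C₁ * (1 + r) ^ (p + 1) :=
    calc -taylorPoly p F x y ≤ C₁ * (1 + r) ^ p :=
          (neg_le_abs _).trans (abs_taylorPoly_le p F x y)
      _ ≤ C₁ * (1 + r) ^ (p + 1) := by gcongr; simp [r]; omega
  have hA : -inner ℝ a y ≤ ‖a‖ * (‖x‖ + 1) * (1 + r) ^ (p + 1) :=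
    (neg_inner_le_mul_one_add_norm_sub a x y).trans (by gcongr)
  have hc : F x + h x - b ≤ |F x + h x - b| * (1 + r) ^ (p + 1) :=
    (le_abs_self _).trans (le_mul_of_one_le_right (abs_nonneg _) h1)
  have hdec : m / (p + 1)! * r ^ (p + 1) ≤ C * (1 + r) ^ (p + 1) := by
    linarith [haff y]
  calc m * r ^ (p + 1) = (p + 1)! * (m / (p + 1)! * r ^ (p + 1)) := by field_simp
    _ ≤ (p + 1)! * (C * (1 + r) ^ (p + 1)) := by gcongr
    _ = (p + 1)! * C * (1 + r) ^ (p + 1) := by ring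

end

lemma tendsto_zero_of_mul_pow_le_const {ι : Type*} {l : Filter ι} {M s : ι → ℝ} {K : ℝ}
    {n : ℕ} (hM : Tendsto M l atTop) (hs : ∀ i, 0 ≤ s i) (hn : n ≠ 0)
    (hbound : ∀ i, M i * s i ^ n ≤ K) : Tendsto s l (𝓝 0) := by
  have hpow : Tendsto (fun i => s i ^ n) l (𝓝 0) := by
    refine tendsto_of_tendsto_of_tendsto_of_le_of_le' tendsto_const_nhds
      ((tendsto_const_nhds (x := K)).div_atTop hM)
      (Eventually.of_forall fun i => pow_nonneg (hs i) n) ?_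
    filter_upwards [hM.eventually_gt_atTop 0] with i hMi
    rw [le_div_iff₀ hMi, mul_comm]
    exact hbound i
  have hroot := hpow.rpow_const (p := (n : ℝ)⁻¹) (Or.inr (by positivity))
  rw [Real.zero_rpow (by positivity)] at hroot
  simpa only [Real.pow_rpow_inv_natCast (hs _) hn] using hroot

lemma tendsto_zero_of_mul_pow_le_mul_one_add_pow {ι : Type*} {l : Filter ι} {M r : ι → ℝ}
    {K : ℝ} {n : ℕ} (hM : Tendsto M l atTop) (hr : ∀ i, 0 ≤ r i) (hn : n ≠ 0)
    (hbound : ∀ i, M i * r i ^ n ≤ K * (1 + r i) ^ n) : Tendsto r l (𝓝 0) := by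
  have hpos : ∀ i, 0 < 1 + r i := fun i => by linarith [hr i]
  have hs : Tendsto (fun i => r i / (1 + r i)) l (𝓝 0) :=
    tendsto_zero_of_mul_pow_le_const hM (fun i => div_nonneg (hr i) (hpos i).le) hn fun i => by
      rw [div_pow, mul_div_assoc', div_le_iff₀ (pow_pos (hpos i) n)]
      exact hbound i
  have hr_eq : ∀ i, r i = r i / (1 + r i) / (1 - r i / (1 + r i)) := fun i => by
    field_simp [(hpos i).ne']
    ring
  have hlim := hs.div (tendsto_const_nhds.sub hs) (by norm_num : (1 : ℝ) - 0 ≠ 0)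
  rw [sub_zero, zero_div] at hlim
  exact (tendsto_congr hr_eq).mpr hlim

theorem nhota_inner_loop_displacement_vanishes_general
    {E : Type*} [NormedAddCommGroup E] [InnerProductSpace ℝ E]
    (p : ℕ)
    (F : E → ℝ)
    (h : E → ℝ) (a : E) (b : ℝ) (haff : ∀ y : E, (inner ℝ a y : ℝ) + b ≤ h y)
    (x : E) (M : ℕ → ℝ)
    (hMtop : Filter.Tendsto M Filter.atTop Filter.atTop)
    (y : ℕ → E)
    (hy : ∀ i : ℕ,
      taylorPoly p F x (y i) + (M i / (Nat.factorial (p + 1) : ℝ)) * ‖y i - x‖ ^ (p + 1)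
        + h (y i) ≤ F x + h x) :
    Filter.Tendsto (fun i : ℕ => ‖y i - x‖) Filter.atTop (nhds 0) := by
  obtain ⟨K, hK⟩ := exists_mul_pow_le_of_model_decrease p F h haff x
  exact tendsto_zero_of_mul_pow_le_mul_one_add_pow hMtop (fun i => norm_nonneg _)
    (Nat.succ_ne_zero p) fun i => hK (M i) (y i) (hy i)

/-- Well-definedness of the NHOTA inner loop: as the regularization parameters `M i` tend
to infinity, points satisfying the model-decrease condition must converge to `x`. -/
theorem nhota_inner_loop_displacement_vanishes
    {E : Type*} [NormedAddCommGroup E] [InnerProductSpace ℝ E] [FiniteDimensional ℝ E]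
    (p : ℕ) (hp : 1 ≤ p)
    (F : E → ℝ) (hF : ContDiff ℝ (p : ℕ∞) F)
    (h : E → ℝ) (a : E) (b : ℝ) (haff : ∀ y : E, (inner ℝ a y : ℝ) + b ≤ h y)
    (x : E) (M : ℕ → ℝ) (hMpos : ∀ i : ℕ, 0 < M i)
    (hMtop : Filter.Tendsto M Filter.atTop Filter.atTop)
    (y : ℕ → E)
    (hy : ∀ i : ℕ,
      taylorPoly p F x (y i) + (M i / (Nat.factorial (p + 1) : ℝ)) * ‖y i - x‖ ^ (p + 1)
        + h (y i) ≤ F x + h x) :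
    Filter.Tendsto (fun i : ℕ => ‖y i - x‖) Filter.atTop (nhds 0) :=
  nhota_inner_loop_displacement_vanishes_general p F h a b haff x M hMtop y hy
end
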